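/- arXiv:math/0304146 — 6 statements merged into one kernel-verified Lean document; each statement's English description precedes it below -/
import Mathlib

section
/- Let α, β : ℝ^{2n} → ℝ be smooth functions, let X be a J-tangent vector field, and set Y := αX + β(JX) (which is again J-tangent). Then for every p ∈ M, L_φ(Y)(p) = (α(p)² + β(p)²)·L_φ(X)(p), i.e. dφ(J[Y, JY])(p) = (α(p)² + β(p)²)·dφ(J[X, JX])(p). -/
open Complex Filter Asymptotics Metric Topology

noncomputable section

/-- `ℝ^{2n}` identified with `ℂ^n`. -/
abbrev E (n : ℕ) : Type := EuclideanSpace ℂ (Fin n)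

/-- `∇_X Y` : the directional derivative of the vector field `Y` in the direction `X`,
with respect to the standard flat connection of `ℝ^{2n}`. -/
def nabla {n : ℕ} (X Y : E n → E n) : E n → E n := fun p => fderiv ℝ Y p (X p)

/-- Lie bracket of vector fields. -/
def lie {n : ℕ} (X Y : E n → E n) : E n → E n := fun p => nabla X Y p - nabla Y X p

/-- The vector field `J X`. -/
def JVF {n : ℕ} (J : E n → (E n →L[ℝ] E n)) (X : E n → E n) : E n → E n := fun p => J p (X p)

/-- The Levi form `L_φ(X) = dφ(J[X, JX])`. -/
def Levi {n : ℕ} (J : E n → (E n →L[ℝ] E n)) (φ : E n → ℝ) (X : E n → E n) : E n → ℝ :=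
  fun p => fderiv ℝ φ p (J p (lie X (JVF J X) p))

/-- `v ∈ T^J_p M`, i.e. `dφ_p v = 0` and `dφ_p (J p v) = 0`. -/
def InTJ {n : ℕ} (J : E n → (E n →L[ℝ] E n)) (φ : E n → ℝ) (p v : E n) : Prop :=
  fderiv ℝ φ p v = 0 ∧ fderiv ℝ φ p (J p v) = 0

/-- A smooth vector field which is `J`-tangent to `M = φ⁻¹(0)`. -/
def JTangent {n : ℕ} (J : E n → (E n →L[ℝ] E n)) (φ : E n → ℝ) (X : E n → E n) : Prop :=
  ContDiff ℝ (⊤ : ℕ∞) X ∧ ∀ p, φ p = 0 → InTJ J φ p (X p)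

/-- A germ of `J`-holomorphic disk: `u` is smooth on the ball of radius `ε > 0` around `0`
and satisfies the Cauchy–Riemann equation `∂u/∂y = J(u) ∂u/∂x` there. -/
def IsJDisk {n : ℕ} (J : E n → (E n →L[ℝ] E n)) (u : ℂ → E n) (ε : ℝ) : Prop :=
  0 < ε ∧ ContDiffOn ℝ (⊤ : ℕ∞) u (ball (0 : ℂ) ε) ∧
    ∀ z ∈ ball (0 : ℂ) ε, fderiv ℝ u z Complex.I = J (u z) (fderiv ℝ u z 1)

/-- `∂f/∂x`. -/
def dx {F : Type*} [NormedAddCommGroup F] [NormedSpace ℝ F] (f : ℂ → F) : ℂ → F :=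
  fun z => fderiv ℝ f z 1

/-- `∂f/∂y`. -/
def dy {F : Type*} [NormedAddCommGroup F] [NormedSpace ℝ F] (f : ℂ → F) : ℂ → F :=
  fun z => fderiv ℝ f z Complex.I

/-- Laplacian `Δ f = ∂²f/∂x² + ∂²f/∂y²`. -/
def lap {F : Type*} [NormedAddCommGroup F] [NormedSpace ℝ F] (f : ℂ → F) : ℂ → F :=
  fun z => dx (dx f) z + dy (dy f) z

/-- `(p,q)`-th mixed derivative `∂^{p+q} f / ∂x^p ∂y^q`. -/
def mixD {F : Type*} [NormedAddCommGroup F] [NormedSpace ℝ F] (p q : ℕ) (f : ℂ → F) : ℂ → F :=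
  dx^[p] (dy^[q] f)

/-- `D^{p,q}_X X = (JX)·⋯·(JX)·X·⋯·X·X` (`q` factors `JX` followed by `p` factors `X`,
applied to `X`). -/
def Dpq {n : ℕ} (J : E n → (E n →L[ℝ] E n)) (X : E n → E n) (p q : ℕ) : E n → E n :=
  (nabla (JVF J X))^[q] ((nabla X)^[p] X)

/-- `X^m = ∇_X(⋯(∇_X X))` with `m` factors (`X^1 = X`). -/
def Xpow {n : ℕ} (X : E n → E n) (m : ℕ) : E n → E n := (nabla X)^[m - 1] X

/-- Iterated Lie brackets with `m` factors taken from the set `S` of vector fields. -/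
inductive IterBrk {n : ℕ} (S : Set (E n → E n)) : ℕ → (E n → E n) → Prop
  | base (W : E n → E n) (hW : W ∈ S) : IterBrk S 1 W
  | brk {m₁ m₂ : ℕ} {W₁ W₂ : E n → E n} (h₁ : IterBrk S m₁ W₁) (h₂ : IterBrk S m₂ W₂) :
      IterBrk S (m₁ + m₂) (lie W₁ W₂)

/-- Right-associated iterated product `X₁·X₂·⋯·X_m` of a list of vector fields. -/
def prodVF {n : ℕ} : List (E n → E n) → (E n → E n)
  | [] => fun _ => 0
  | [X] => X
  | X :: Y :: rest => nabla X (prodVF (Y :: rest))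

end

/-!
Writing `Z = JX`, `J² = -1` gives `JY = -β X + α Z`. For vector fields `aX + bZ` and `cX + dZ`
the Lie bracket equals `(ad - bc)[X, Z]` modulo the span of `X` and `Z`, so `[Y, JY]` is
`(α² + β²)[X, JX]` plus a combination of `X` and `JX`. Applying `J` keeps that combination in the
span of `X` and `JX`, which `dφ` annihilates along `M` by `J`-tangency.
-/

variable {n : ℕ}

theorem fderiv_smul_add_smul_apply {F : Type*} [NormedAddCommGroup F] [NormedSpace ℝ F]
    {G : Type*} [NormedAddCommGroup G] [NormedSpace ℝ G] {a b : F → ℝ} {X Z : F → G} {p : F}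
    (ha : DifferentiableAt ℝ a p) (hb : DifferentiableAt ℝ b p)
    (hX : DifferentiableAt ℝ X p) (hZ : DifferentiableAt ℝ Z p) (v : F) :
    fderiv ℝ (fun x => a x • X x + b x • Z x) p v
      = a p • fderiv ℝ X p v + fderiv ℝ a p v • X p
        + (b p • fderiv ℝ Z p v + fderiv ℝ b p v • Z p) := by
  have h : HasFDerivAt (fun x => a x • X x + b x • Z x) _ p :=
    (ha.hasFDerivAt.smul hX.hasFDerivAt).add (hb.hasFDerivAt.smul hZ.hasFDerivAt)
  rw [h.fderiv]
  simp only [add_apply, smul_apply, ContinuousLinearMap.smulRight_apply]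

theorem lie_smul_add_smul {a b c d : E n → ℝ} {X Z : E n → E n} {p : E n}
    (ha : DifferentiableAt ℝ a p) (hb : DifferentiableAt ℝ b p)
    (hc : DifferentiableAt ℝ c p) (hd : DifferentiableAt ℝ d p)
    (hX : DifferentiableAt ℝ X p) (hZ : DifferentiableAt ℝ Z p) :
    lie (fun x => a x • X x + b x • Z x) (fun x => c x • X x + d x • Z x) p
      = (a p * d p - b p * c p) • lie X Z p
        + (fderiv ℝ c p (a p • X p + b p • Z p) - fderiv ℝ a p (c p • X p + d p • Z p)) • X p
        + (fderiv ℝ d p (a p • X p + b p • Z p) - fderiv ℝ b p (c p • X p + d p • Z p)) • Z p := by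
  simp only [lie, nabla, fderiv_smul_add_smul_apply ha hb hX hZ,
    fderiv_smul_add_smul_apply hc hd hX hZ, map_add, map_smul, smul_add, smul_sub, sub_smul,
    add_smul, mul_smul]
  module

theorem JVF_smul_add_smul {J : E n → (E n →L[ℝ] E n)} (hJ2 : ∀ x v, J x (J x v) = -v)
    (a b : E n → ℝ) (X : E n → E n) :
    JVF J (fun x => a x • X x + b x • JVF J X x) = fun x => -b x • X x + a x • JVF J X x := by
  funext x
  simp only [JVF, map_add, map_smul, hJ2, smul_neg, neg_smul]
  abel

theorem Levi_eq_mul_of_lie_eq {J : E n → (E n →L[ℝ] E n)} {φ : E n → ℝ} {X Y : E n → E n}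
    {p : E n} (hJ2 : ∀ x v, J x (J x v) = -v) (hXp : InTJ J φ p (X p)) {k a b : ℝ}
    (hlie : lie Y (JVF J Y) p = k • lie X (JVF J X) p + a • X p + b • JVF J X p) :
    Levi J φ Y p = k * Levi J φ X p := by
  obtain ⟨hX, hJX⟩ := hXp
  simp only [Levi, hlie, JVF, map_add, map_smul, hJ2, smul_neg, map_neg, hX, hJX,
    smul_eq_mul, mul_zero, neg_zero, add_zero]

theorem levi_form_rescaling_general {n : ℕ} (J : E n → (E n →L[ℝ] E n)) (φ : E n → ℝ)
    (hJsmooth : ContDiff ℝ (⊤ : ℕ∞) J) (hJ2 : ∀ x v, J x (J x v) = -v)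
    (α β : E n → ℝ) (hα : ContDiff ℝ (⊤ : ℕ∞) α) (hβ : ContDiff ℝ (⊤ : ℕ∞) β)
    (X : E n → E n) (hX : JTangent J φ X) :
    ∀ p, φ p = 0 →
      Levi J φ (fun x => α x • X x + β x • (J x (X x))) p
        = (α p ^ 2 + β p ^ 2) * Levi J φ X p := by
  intro p hp
  obtain ⟨hXsmooth, hXtangent⟩ := hX
  have hJXsmooth : ContDiff ℝ (⊤ : ℕ∞) (JVF J X) := hJsmooth.clm_apply hXsmooth
  have h_ne : ((⊤ : ℕ∞) : WithTop ℕ∞) ≠ 0 := by simp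
  change Levi J φ (fun x => α x • X x + β x • JVF J X x) p = _
  apply Levi_eq_mul_of_lie_eq hJ2 (hXtangent p hp)
  rw [JVF_smul_add_smul hJ2, lie_smul_add_smul (hα.differentiable h_ne p)
    (hβ.differentiable h_ne p) (hβ.neg.differentiable h_ne p) (hα.differentiable h_ne p)
    (hXsmooth.differentiable h_ne p) (hJXsmooth.differentiable h_ne p)]
  congr 3
  ring

/-- `L_φ((α + βJ)X)(p) = (α(p)² + β(p)²)·L_φ(X)(p)` on `M`. -/
theorem levi_form_rescaling {n : ℕ} (J : E n → (E n →L[ℝ] E n)) (φ : E n → ℝ)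
    (hJsmooth : ContDiff ℝ (⊤ : ℕ∞) J) (hJ2 : ∀ x v, J x (J x v) = -v)
    (hJ0 : ∀ v : E n, J 0 v = Complex.I • v)
    (hφsmooth : ContDiff ℝ (⊤ : ℕ∞) φ) (hφ0 : φ 0 = 0)
    (hreg : ∀ x, φ x = 0 → fderiv ℝ φ x ≠ 0)
    (α β : E n → ℝ) (hα : ContDiff ℝ (⊤ : ℕ∞) α) (hβ : ContDiff ℝ (⊤ : ℕ∞) β)
    (X : E n → E n) (hX : JTangent J φ X) :
    ∀ p, φ p = 0 →
      Levi J φ (fun x => α x • X x + β x • (J x (X x))) p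
        = (α p ^ 2 + β p ^ 2) * Levi J φ X p :=
  levi_form_rescaling_general J φ hJsmooth hJ2 α β hα hβ X hX
end

section
/- For every p ∈ M and every J-tangent vector field X, the Levi form satisfies L_φ(X)(p) = D²φ_p(X(p), X(p)) + D²φ_p(J(p)X(p), J(p)X(p)) + dφ_p( (∇_{JX}J)(X) − (∇_X J)(JX) )(p), where D²φ denotes the second derivative (Hessian) of φ, ∇ is the standard flat connection of ℝ^{2n} (a symmetric connection), and ∇_Y J denotes the directional derivative of the endomorphism-valued map J in the direction Y. -/
open Complex Filter Asymptotics Metric Topology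

/-! Both `dφ(X)` and `dφ(JX)` vanish on `M`, so by Lagrange multipliers their differentials vanish
on `TM`; evaluated at `X` and `JX` this gives `dφ(DX·X) = -D²φ(X,X)` and
`dφ(D(JX)·JX) = -D²φ(JX,JX)`. Expanding `J[X,JX]` by the product rule, and trading `J(∇_X J)X`
for `-(∇_X J)(JX)` via the derivative of `J² = -1`, the Levi form becomes a combination of exactly
these terms. -/

section General

variable {V : Type*} [NormedAddCommGroup V] [NormedSpace ℝ V]

theorem fderiv_anticommutes_of_apply_apply_eq_neg {J : V → V →L[ℝ] V} {p : V}
    (hJ : DifferentiableAt ℝ J p) (hJ2 : ∀ x v, J x (J x v) = -v) (v w : V) :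
    fderiv ℝ J p v (J p w) + J p (fderiv ℝ J p v w) = 0 := by
  have hconst : (fun x => (J x).comp (J x)) = fun _ => -ContinuousLinearMap.id ℝ V := by
    ext1 x; ext1 u; simp [hJ2]
  have hderiv := fderiv_clm_comp hJ hJ
  rw [hconst, fderiv_fun_const] at hderiv
  simpa [add_comm] using congr($hderiv.symm v w)

theorem HasStrictFDerivAt.apply_eq_zero_of_eq_zero_on_levelSet [CompleteSpace V] {φ g : V → ℝ}
    {φ' g' : V →L[ℝ] ℝ} {p : V} (hφ : HasStrictFDerivAt φ φ' p) (hg : HasStrictFDerivAt g g' p)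
    (hφ' : φ' ≠ 0) (hgM : ∀ q, φ q = φ p → g q = 0) {v : V} (hv : φ' v = 0) : g' v = 0 := by
  have hextr : IsLocalExtrOn g {q | φ q = φ p} p :=
    Or.inl <| Filter.eventually_of_mem self_mem_nhdsWithin fun q hq => by
      rw [hgM q hq, hgM p rfl]
  obtain ⟨a, b, hab, hsum⟩ := hextr.exists_multipliers_of_hasStrictFDerivAt_1d hφ hg
  have hb : b ≠ 0 := by
    rintro rfl
    have ha : a ≠ 0 := fun ha => hab (by simp [ha])
    exact hφ' ((smul_eq_zero.mp (by simpa using hsum)).resolve_left ha)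
  have hsum_v := congr($hsum v)
  simp only [add_apply, FunLike.coe_smul, Pi.smul_apply, hv, smul_eq_mul, mul_zero, zero_add,
    zero_apply] at hsum_v
  exact (mul_eq_zero.mp hsum_v).resolve_left hb

theorem fderiv_apply_add_fderiv_fderiv_eq_zero_of_tangent [CompleteSpace V] {φ : V → ℝ}
    {Y : V → V} {p v : V} (hφ : ContDiff ℝ 2 φ) (hY : ContDiff ℝ 1 Y) (hreg : fderiv ℝ φ p ≠ 0)
    (hYM : ∀ q, φ q = φ p → fderiv ℝ φ q (Y q) = 0) (hv : fderiv ℝ φ p v = 0) :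
    fderiv ℝ φ p (fderiv ℝ Y p v) + fderiv ℝ (fderiv ℝ φ) p v (Y p) = 0 := by
  have hdφ : ContDiff ℝ 1 (fderiv ℝ φ) := hφ.fderiv_right le_rfl
  have hg : ContDiff ℝ 1 fun q => fderiv ℝ φ q (Y q) := hdφ.clm_apply hY
  have key := (hφ.hasStrictFDerivAt (by norm_num)).apply_eq_zero_of_eq_zero_on_levelSet
    (hg.hasStrictFDerivAt one_ne_zero) hreg hYM hv
  rwa [fderiv_clm_apply (hdφ.differentiable one_ne_zero p) (hY.differentiable one_ne_zero p)]
    at key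

end General

section AlmostComplex

variable {n : ℕ} {J : E n → (E n →L[ℝ] E n)} {X : E n → E n} {p : E n}

theorem fderiv_JVF_apply (hJ : DifferentiableAt ℝ J p) (hX : DifferentiableAt ℝ X p) (v : E n) :
    fderiv ℝ (JVF J X) p v = J p (fderiv ℝ X p v) + fderiv ℝ J p v (X p) := by
  unfold JVF
  rw [fderiv_clm_apply hJ hX]
  rfl

theorem apply_lie_JVF (hJ : DifferentiableAt ℝ J p) (hX : DifferentiableAt ℝ X p)
    (hJ2 : ∀ x v, J x (J x v) = -v) :
    J p (lie X (JVF J X) p) = -fderiv ℝ X p (X p) - fderiv ℝ J p (X p) (J p (X p))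
      - J p (fderiv ℝ X p (J p (X p))) := by
  have hJJ := fderiv_anticommutes_of_apply_apply_eq_neg hJ hJ2 (X p) (X p)
  rw [lie, nabla, nabla, fderiv_JVF_apply hJ hX, map_sub, map_add, hJ2,
    eq_neg_of_add_eq_zero_right hJJ]
  abel

end AlmostComplex

theorem levi_form_hessian_general {n : ℕ} (J : E n → (E n →L[ℝ] E n)) (φ : E n → ℝ)
    (hJsmooth : ContDiff ℝ (⊤ : ℕ∞) J) (hJ2 : ∀ x v, J x (J x v) = -v)
    (hφsmooth : ContDiff ℝ (⊤ : ℕ∞) φ)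
    (hreg : ∀ x, φ x = 0 → fderiv ℝ φ x ≠ 0)
    (X : E n → E n) (hX : JTangent J φ X) :
    ∀ p, φ p = 0 →
      Levi J φ X p
        = fderiv ℝ (fderiv ℝ φ) p (X p) (X p)
          + fderiv ℝ (fderiv ℝ φ) p (J p (X p)) (J p (X p))
          + fderiv ℝ φ p
              ((fderiv ℝ J p (J p (X p))) (X p) - (fderiv ℝ J p (X p)) (J p (X p))) := by
  intro p hp
  obtain ⟨hXsmooth, hXM⟩ := hX
  have hφ2 : ContDiff ℝ 2 φ := hφsmooth.of_le (WithTop.coe_le_coe.mpr le_top)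
  have hX1 : ContDiff ℝ 1 X := hXsmooth.of_le (WithTop.coe_le_coe.mpr le_top)
  have hJX1 : ContDiff ℝ 1 (JVF J X) :=
    (hJsmooth.of_le (WithTop.coe_le_coe.mpr le_top)).clm_apply hX1
  have hJ : DifferentiableAt ℝ J p := hJsmooth.differentiable (by simp) p
  have hXp : DifferentiableAt ℝ X p := hX1.differentiable one_ne_zero p
  have hM : ∀ q, φ q = φ p → InTJ J φ q (X q) := fun q hq => hXM q (hq.trans hp)
  have hXX := fderiv_apply_add_fderiv_fderiv_eq_zero_of_tangent hφ2 hX1 (hreg p hp)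
    (fun q hq => (hM q hq).1) (hM p rfl).1
  have hJXJX := fderiv_apply_add_fderiv_fderiv_eq_zero_of_tangent hφ2 hJX1 (hreg p hp)
    (fun q hq => (hM q hq).2) (hM p rfl).2
  rw [fderiv_JVF_apply hJ hXp, map_add] at hJXJX
  rw [Levi, apply_lie_JVF hJ hXp hJ2, map_sub]
  simp only [map_sub, map_neg, JVF] at hJXJX ⊢
  linarith

/-- the Levi form in terms of the Hessian of `φ` and derivatives of `J`:
`L_φ(X) = D²φ(X,X) + D²φ(JX,JX) + dφ((∇_{JX}J)X − (∇_X J)(JX))`. -/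
theorem levi_form_hessian {n : ℕ} (J : E n → (E n →L[ℝ] E n)) (φ : E n → ℝ)
    (hJsmooth : ContDiff ℝ (⊤ : ℕ∞) J) (hJ2 : ∀ x v, J x (J x v) = -v)
    (hJ0 : ∀ v : E n, J 0 v = Complex.I • v)
    (hφsmooth : ContDiff ℝ (⊤ : ℕ∞) φ) (hφ0 : φ 0 = 0)
    (hreg : ∀ x, φ x = 0 → fderiv ℝ φ x ≠ 0)
    (X : E n → E n) (hX : JTangent J φ X) :
    ∀ p, φ p = 0 →
      Levi J φ X p
        = fderiv ℝ (fderiv ℝ φ) p (X p) (X p)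
          + fderiv ℝ (fderiv ℝ φ) p (J p (X p)) (J p (X p))
          + fderiv ℝ φ p
              ((fderiv ℝ J p (J p (X p))) (X p) - (fderiv ℝ J p (X p)) (J p (X p))) :=
  levi_form_hessian_general J φ hJsmooth hJ2 hφsmooth hreg X hX
end

section
/- Let u be a J-holomorphic disk with u(0) = 0 and ∂u/∂x(0) ∈ T^J_0 M, and let X be any J-tangent vector field with X(0) = ∂u/∂x(0). Then Δ(φ∘u)(0) = L_φ(X)(0), where Δ = ∂²/∂x² + ∂²/∂y² is the Laplacian in the coordinate z = x + iy on ℂ. -/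
open Complex Filter Asymptotics Metric Topology

/-!
Write `v = ∂u/∂x(0)`. Differentiating the Cauchy–Riemann equation `∂u/∂y = J(u) ∂u/∂x` once more,
using `J² = -1` and the symmetry of second derivatives, gives `Δu(0) = dJ(Jv)v + J dJ(v)v`, hence
`Δ(φ∘u)(0) = D²φ(v,v) + D²φ(Jv,Jv) + dφ(dJ(Jv)v + J dJ(v)v)`. On the other hand `dφ(X)` and
`dφ(JX)` vanish on `M`, so their derivatives along the tangent vectors `v` and `Jv` vanish at the
regular point `0` (Lagrange multipliers). This expresses `D²φ(v,v)` and `D²φ(Jv,Jv)` through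
first derivatives of `X` and `JX`, and expanding `dφ(J[X,JX])` gives the same expression.
-/

section Calculus

variable {𝕜 : Type*} [NontriviallyNormedField 𝕜]
  {F G H K : Type*} [NormedAddCommGroup F] [NormedSpace 𝕜 F] [NormedAddCommGroup G]
  [NormedSpace 𝕜 G] [NormedAddCommGroup H] [NormedSpace 𝕜 H] [NormedAddCommGroup K]
  [NormedSpace 𝕜 K]

theorem ContDiffAt.differentiableAt_fderiv {f : F → G} {x : F} (hf : ContDiffAt 𝕜 2 f x) :
    DifferentiableAt 𝕜 (fderiv 𝕜 f) x :=
  (hf.fderiv_right (m := 1) le_rfl).differentiableAt one_ne_zero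

theorem fderiv_clm_apply_apply {c : F → G →L[𝕜] H} {w : F → G} {x : F}
    (hc : DifferentiableAt 𝕜 c x) (hw : DifferentiableAt 𝕜 w x) (b : F) :
    fderiv 𝕜 (fun z => c z (w z)) x b = fderiv 𝕜 c x b (w x) + c x (fderiv 𝕜 w x b) := by
  rw [fderiv_clm_apply hc hw, add_comm]
  rfl

theorem fderiv_clm_comp_apply_apply {A : K → G →L[𝕜] H} {u : F → K} {w : F → G} {x : F}
    (hA : DifferentiableAt 𝕜 A (u x)) (hu : DifferentiableAt 𝕜 u x)
    (hw : DifferentiableAt 𝕜 w x) (b : F) :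
    fderiv 𝕜 (fun z => A (u z) (w z)) x b =
      fderiv 𝕜 A (u x) (fderiv 𝕜 u x b) (w x) + A (u x) (fderiv 𝕜 w x b) := by
  rw [fderiv_clm_apply_apply (c := fun z => A (u z)) (hA.comp x hu) hw, fderiv_fun_comp x hA hu]
  rfl

theorem fderiv_fderiv_apply_const {u : F → G} {x : F} (hu : DifferentiableAt 𝕜 (fderiv 𝕜 u) x)
    (a b : F) : fderiv 𝕜 (fun z => fderiv 𝕜 u z a) x b = fderiv 𝕜 (fderiv 𝕜 u) x b a := by
  simp [fderiv_clm_apply_apply hu (differentiableAt_const a)]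

theorem fderiv_fderiv_comp_apply {φ : G → H} {u : F → G} {x : F}
    (hφ : ContDiffAt 𝕜 2 φ (u x)) (hu : ContDiffAt 𝕜 2 u x) (a b : F) :
    fderiv 𝕜 (fun z => fderiv 𝕜 (fun y => φ (u y)) z a) x b =
      fderiv 𝕜 (fderiv 𝕜 φ) (u x) (fderiv 𝕜 u x b) (fderiv 𝕜 u x a) +
        fderiv 𝕜 φ (u x) (fderiv 𝕜 (fderiv 𝕜 u) x b a) := by
  have hφ' : ∀ᶠ z in 𝓝 x, DifferentiableAt 𝕜 φ (u z) :=
    hu.continuousAt.eventually ((hφ.eventually (by simp)).mono fun y hy =>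
      hy.differentiableAt two_ne_zero)
  have hu' : ∀ᶠ z in 𝓝 x, DifferentiableAt 𝕜 u z :=
    (hu.eventually (by simp)).mono fun y hy => hy.differentiableAt two_ne_zero
  have hchain : (fun z => fderiv 𝕜 (fun y => φ (u y)) z a) =ᶠ[𝓝 x]
      fun z => fderiv 𝕜 φ (u z) (fderiv 𝕜 u z a) := by
    filter_upwards [hφ', hu'] with z hφz huz
    rw [fderiv_fun_comp z hφz huz]
    rfl
  rw [hchain.fderiv_eq, fderiv_clm_comp_apply_apply hφ.differentiableAt_fderiv
    (hu.differentiableAt two_ne_zero) (hu.differentiableAt_fderiv.clm_apply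
    (differentiableAt_const a)), fderiv_fderiv_apply_const hu.differentiableAt_fderiv]

end Calculus

theorem lap_comp {F G : Type*} [NormedAddCommGroup F] [NormedSpace ℝ F] [NormedAddCommGroup G]
    [NormedSpace ℝ G] {φ : F → G} {u : ℂ → F} {x : ℂ}
    (hφ : ContDiffAt ℝ 2 φ (u x)) (hu : ContDiffAt ℝ 2 u x) :
    lap (fun z => φ (u z)) x =
      fderiv ℝ (fderiv ℝ φ) (u x) (dx u x) (dx u x) +
        fderiv ℝ (fderiv ℝ φ) (u x) (dy u x) (dy u x) + fderiv ℝ φ (u x) (lap u x) := by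
  have hdu := hu.differentiableAt_fderiv
  unfold lap dx dy
  rw [fderiv_fderiv_comp_apply hφ hu, fderiv_fderiv_comp_apply hφ hu,
    fderiv_fderiv_apply_const hdu, fderiv_fderiv_apply_const hdu, map_add]
  abel

theorem HasStrictFDerivAt.apply_eq_zero_of_const_on_levelSet {E : Type*} [NormedAddCommGroup E]
    [NormedSpace ℝ E] [CompleteSpace E] {φ g : E → ℝ} {φ' g' : StrongDual ℝ E} {p w : E}
    (hφ : HasStrictFDerivAt φ φ' p) (hφ' : φ' ≠ 0) (hg : HasStrictFDerivAt g g' p)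
    (hconst : ∀ q, φ q = φ p → g q = g p) (hw : φ' w = 0) : g' w = 0 := by
  have hextr : IsLocalExtrOn g {q | φ q = φ p} p :=
    Or.inl (eventually_nhdsWithin_of_forall fun q hq => (hconst q hq).ge)
  obtain ⟨a, b, hab, hmult⟩ := hextr.exists_multipliers_of_hasStrictFDerivAt_1d hφ hg
  have hb : b ≠ 0 := by
    rintro rfl
    have ha : a ≠ 0 := by simpa using hab
    exact hφ' (by simpa [ha] using hmult)
  simpa [hw, hb] using DFunLike.congr_fun hmult w

theorem fderiv_fderiv_apply_eq_neg_of_tangent {E : Type*} [NormedAddCommGroup E]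
    [NormedSpace ℝ E] [CompleteSpace E] {φ : E → ℝ} {Y : E → E} {p w : E}
    (hφ : ContDiffAt ℝ 2 φ p) (hreg : fderiv ℝ φ p ≠ 0) (hY : ContDiffAt ℝ 1 Y p)
    (htan : ∀ q, φ q = φ p → fderiv ℝ φ q (Y q) = 0) (hw : fderiv ℝ φ p w = 0) :
    fderiv ℝ (fderiv ℝ φ) p w (Y p) = -fderiv ℝ φ p (fderiv ℝ Y p w) := by
  have hdφ : ContDiffAt ℝ 1 (fderiv ℝ φ) p := hφ.fderiv_right le_rfl
  have hg := (hdφ.clm_apply hY).hasStrictFDerivAt one_ne_zero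
  have hzero := (hφ.hasStrictFDerivAt two_ne_zero).apply_eq_zero_of_const_on_levelSet hreg hg
    (fun q hq => by rw [htan q hq, htan p rfl]) hw
  rw [fderiv_clm_apply_apply (hdφ.differentiableAt one_ne_zero)
    (hY.differentiableAt one_ne_zero)] at hzero
  exact eq_neg_of_add_eq_zero_left hzero

theorem IsJDisk.lap_eq {n : ℕ} {J : E n → (E n →L[ℝ] E n)} {u : ℂ → E n} {ε : ℝ}
    (hu : IsJDisk J u ε) (hJ : DifferentiableAt ℝ J (u 0)) (hJ2 : ∀ v, J (u 0) (J (u 0) v) = -v) :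
    lap u 0 =
      fderiv ℝ J (u 0) (dy u 0) (dx u 0) + J (u 0) (fderiv ℝ J (u 0) (dx u 0) (dx u 0)) := by
  have hball : ball (0 : ℂ) ε ∈ 𝓝 0 := ball_mem_nhds 0 hu.1
  have hu2 : ContDiffAt ℝ 2 u 0 := (hu.2.1.contDiffAt hball).of_le (WithTop.coe_le_coe.2 le_top)
  have hdu := hu2.differentiableAt_fderiv
  have hdxu : DifferentiableAt ℝ (dx u) 0 := hdu.clm_apply (differentiableAt_const 1)
  have hCR : dy u =ᶠ[𝓝 0] fun z => J (u z) (dx u z) :=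
    Filter.mem_of_superset hball fun z hz => hu.2.2 z hz
  have hdy : ∀ b, fderiv ℝ (dy u) 0 b =
      fderiv ℝ J (u 0) (fderiv ℝ u 0 b) (dx u 0) + J (u 0) (fderiv ℝ (dx u) 0 b) := by
    intro b
    rw [hCR.fderiv_eq, fderiv_clm_comp_apply_apply hJ (hu2.differentiableAt two_ne_zero) hdxu]
  have hsymm : fderiv ℝ (dx u) 0 Complex.I = fderiv ℝ (dy u) 0 1 := by
    change fderiv ℝ (fun z => fderiv ℝ u z 1) 0 Complex.I =
      fderiv ℝ (fun z => fderiv ℝ u z Complex.I) 0 1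
    rw [fderiv_fderiv_apply_const hdu, fderiv_fderiv_apply_const hdu]
    exact hu2.isSymmSndFDerivAt (by simp) Complex.I 1
  change dx (dx u) 0 + fderiv ℝ (dy u) 0 Complex.I = _
  rw [hdy, hsymm, hdy, map_add, hJ2]
  simp only [dx, dy]
  abel

theorem Levi_eq_fderiv {n : ℕ} {J : E n → (E n →L[ℝ] E n)} {φ : E n → ℝ} {X : E n → E n}
    {p : E n} (hJ : DifferentiableAt ℝ J p) (hX : DifferentiableAt ℝ X p)
    (hJ2 : ∀ v, J p (J p v) = -v) :
    Levi J φ X p = fderiv ℝ φ p (J p (fderiv ℝ J p (X p) (X p))) -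
      fderiv ℝ φ p (fderiv ℝ X p (X p)) - fderiv ℝ φ p (J p (fderiv ℝ X p (J p (X p)))) := by
  change fderiv ℝ φ p (J p (fderiv ℝ (fun q => J q (X q)) p (X p) - fderiv ℝ X p (J p (X p)))) = _
  rw [fderiv_clm_apply_apply hJ hX, map_sub, map_add, hJ2, map_sub, map_add, map_neg]
  abel

theorem laplacian_eq_levi_general {n : ℕ} (J : E n → (E n →L[ℝ] E n)) (φ : E n → ℝ)
    (hJsmooth : ContDiff ℝ (⊤ : ℕ∞) J) (hJ2 : ∀ x v, J x (J x v) = -v)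
    (hφsmooth : ContDiff ℝ (⊤ : ℕ∞) φ) (hφ0 : φ 0 = 0)
    (hreg : ∀ x, φ x = 0 → fderiv ℝ φ x ≠ 0)
    (u : ℂ → E n) (ε : ℝ) (hu : IsJDisk J u ε) (hu0 : u 0 = 0)
    (hdir : InTJ J φ 0 (dx u 0))
    (X : E n → E n) (hX : JTangent J φ X) (hX0 : X 0 = dx u 0) :
    lap (fun z => φ (u z)) 0 = Levi J φ X 0 := by
  have hJ : Differentiable ℝ J := hJsmooth.differentiable (by simp)
  have hφ2 : ContDiff ℝ 2 φ := hφsmooth.of_le (WithTop.coe_le_coe.2 le_top)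
  have hX1 : ContDiff ℝ 1 X := hX.1.of_le (WithTop.coe_le_coe.2 le_top)
  have hJX1 : ContDiff ℝ 1 (JVF J X) :=
    (hJsmooth.of_le (WithTop.coe_le_coe.2 le_top)).clm_apply hX1
  have hu2 : ContDiffAt ℝ 2 u 0 :=
    (hu.2.1.contDiffAt (ball_mem_nhds 0 hu.1)).of_le (WithTop.coe_le_coe.2 le_top)
  have hdy : dy u 0 = J 0 (dx u 0) := by rw [← hu0]; exact hu.2.2 0 (mem_ball_self hu.1)
  have hvv := fderiv_fderiv_apply_eq_neg_of_tangent hφ2.contDiffAt (hreg 0 hφ0) hX1.contDiffAt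
    (fun q hq => (hX.2 q (hφ0 ▸ hq)).1) hdir.1
  have hJvJv := fderiv_fderiv_apply_eq_neg_of_tangent hφ2.contDiffAt (hreg 0 hφ0)
    hJX1.contDiffAt (fun q hq => (hX.2 q (hφ0 ▸ hq)).2) hdir.2
  rw [show JVF J X = fun p => J p (X p) from rfl, fderiv_clm_apply_apply (hJ 0)
    (hX1.differentiable one_ne_zero 0)] at hJvJv
  rw [lap_comp (hu0 ▸ hφ2.contDiffAt) hu2, hu.lap_eq (hJ _) (hJ2 _),
    Levi_eq_fderiv (hJ 0) (hX1.differentiable one_ne_zero 0) (hJ2 0), hdy, hu0]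
  simp only [hX0, map_add] at hvv hJvJv ⊢
  linarith

/-- for a `J`-holomorphic disk `u` through `0 ∈ M` with `∂u/∂x(0) ∈ T^J_0 M`,
and any `J`-tangent vector field `X` with `X(0) = ∂u/∂x(0)`, one has
`Δ(φ∘u)(0) = L_φ(X)(0)`. -/
theorem laplacian_eq_levi {n : ℕ} (J : E n → (E n →L[ℝ] E n)) (φ : E n → ℝ)
    (hJsmooth : ContDiff ℝ (⊤ : ℕ∞) J) (hJ2 : ∀ x v, J x (J x v) = -v)
    (hJ0 : ∀ v : E n, J 0 v = Complex.I • v)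
    (hφsmooth : ContDiff ℝ (⊤ : ℕ∞) φ) (hφ0 : φ 0 = 0)
    (hreg : ∀ x, φ x = 0 → fderiv ℝ φ x ≠ 0)
    (u : ℂ → E n) (ε : ℝ) (hu : IsJDisk J u ε) (hu0 : u 0 = 0)
    (hdir : InTJ J φ 0 (dx u 0))
    (X : E n → E n) (hX : JTangent J φ X) (hX0 : X 0 = dx u 0) :
    lap (fun z => φ (u z)) 0 = Levi J φ X 0 :=
  laplacian_eq_levi_general J φ hJsmooth hJ2 hφsmooth hφ0 hreg u ε hu hu0 hdir X hX hX0
end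

section
/- Let k ≥ 0 and let X, Y be J-tangent vector fields such that D^{a,b}_X X(0) = D^{a,b}_Y Y(0) for all a, b ≥ 0 with a + b ≤ k. Then for all p, q ≥ 0 with p + q = k + 1, D^{p,q}_X X(0) − D^{p,q}_Y Y(0) ∈ T^J_0 M. -/
/-!
Let `c` be `dφ` or `dφ ∘ J`. As `X` and `JX` are tangent to `M`, `c(X)` vanishes on `M`, and
differentiating a function that vanishes on `M` along a field tangent to `M` (implicit function
theorem) gives again such a function; so `L_{JX}^q L_X^p (c(X))` vanishes on `M`. By the product
rule it differs from `c(D^{p,q}_X X)` by a smooth expression in `x` and the `D^{a,b}_X X` with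
`a + b < p + q`, and the same expression gives the difference for `Y`. At `0 ∈ M` the lower order
terms of `X` and `Y` agree, hence so do `c(D^{p,q}_X X)` and `c(D^{p,q}_Y Y)`.
-/

open Complex Filter Asymptotics Metric Topology

open scoped ContDiff
open Set

noncomputable section

section DerivAlong

variable {F : Type*} [NormedAddCommGroup F] [NormedSpace ℝ F]

def derivAlong (V : F → F) (h : F → ℝ) : F → ℝ := fun x => fderiv ℝ h x (V x)

theorem ContDiff.derivAlong {V : F → F} {h : F → ℝ} (hV : ContDiff ℝ ∞ V)
    (hh : ContDiff ℝ ∞ h) : ContDiff ℝ ∞ (derivAlong V h) :=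
  (hh.fderiv_right (m := ∞) (by simp)).clm_apply hV

theorem derivAlong_add {V : F → F} {f g : F → ℝ} (hf : Differentiable ℝ f)
    (hg : Differentiable ℝ g) : derivAlong V (f + g) = derivAlong V f + derivAlong V g := by
  funext x
  simp [derivAlong, fderiv_add (hf x) (hg x)]

theorem derivAlong_clm_apply {V Z : F → F} {c : F → F →L[ℝ] ℝ} (hc : Differentiable ℝ c)
    (hZ : Differentiable ℝ Z) (x : F) :
    derivAlong V (fun y => c y (Z y)) x = fderiv ℝ c x (V x) (Z x) + c x (fderiv ℝ Z x (V x)) := by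
  simp [derivAlong, fderiv_clm_apply (hc x) (hZ x), add_comm]

theorem derivAlong_comp_prod_pi {ι : Type*} [Fintype ι] {V : F → F} {D : ι → F → F}
    {Φ : F × (ι → F) → ℝ} (hΦ : Differentiable ℝ Φ) (hD : ∀ i, Differentiable ℝ (D i)) (x : F) :
    derivAlong V (fun y => Φ (y, fun i => D i y)) x
      = fderiv ℝ Φ (x, fun i => D i x) (V x, fun i => fderiv ℝ (D i) x (V x)) := by
  have hjet : HasFDerivAt (fun y => (y, fun i => D i y))
      ((ContinuousLinearMap.id ℝ F).prod (ContinuousLinearMap.pi fun i => fderiv ℝ (D i) x)) x :=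
    (hasFDerivAt_id x).prodMk (hasFDerivAt_pi.2 fun i => (hD i x).hasFDerivAt)
  exact congrArg (fun L => L (V x)) ((hΦ _).hasFDerivAt.comp x hjet).fderiv

theorem derivAlong_sub_clm_apply {V Z Z' : F → F} {H : F → ℝ} {c : F → F →L[ℝ] ℝ}
    (hc : Differentiable ℝ c) (hZ : Differentiable ℝ Z)
    (hR : Differentiable ℝ (H - fun x => c x (Z x))) (hZ' : ∀ x, Z' x = fderiv ℝ Z x (V x)) :
    derivAlong V H - (fun x => c x (Z' x))
      = derivAlong V (H - fun x => c x (Z x)) + fun x => fderiv ℝ c x (V x) (Z x) := by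
  have hsplit : H = (H - fun x => c x (Z x)) + fun x => c x (Z x) := (sub_add_cancel _ _).symm
  have hcZ : Differentiable ℝ fun x => c x (Z x) := fun x => (hc x).clm_apply (hZ x)
  conv_lhs => rw [hsplit, derivAlong_add hR hcZ]
  funext x
  simp only [Pi.add_apply, Pi.sub_apply, derivAlong_clm_apply hc hZ, hZ']
  ring

end DerivAlong

section LevelSet

variable {F : Type*} [NormedAddCommGroup F] [NormedSpace ℝ F]

/-- The implicit function theorem parametrizes the level set near `p` by `ker φ'`. -/
theorem HasStrictFDerivAt.fderiv_apply_eq_zero_of_eqOn_levelSet [CompleteSpace F]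
    {φ g : F → ℝ} {φ' : F →L[ℝ] ℝ} {p v : F} (hφ : HasStrictFDerivAt φ φ' p) (hφ' : φ' ≠ 0)
    (hg : DifferentiableAt ℝ g p) (hgM : EqOn g 0 (φ ⁻¹' {φ p})) (hv : φ' v = 0) :
    fderiv ℝ g p v = 0 := by
  have hrange : φ'.range = ⊤ := Module.Dual.range_eq_top_of_ne_zero (by exact_mod_cast hφ')
  set ψ := hφ.implicitFunction φ φ' hrange (φ p)
  have hψ_level : ∀ᶠ y in 𝓝 0, φ (ψ y) = φ p :=
    (Continuous.prodMk_right (φ p)).continuousAt.eventually (hφ.map_implicitFunction_eq hrange)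
  have hgψ : HasFDerivAt (g ∘ ψ) ((fderiv ℝ g p).comp φ'.ker.subtypeL) 0 := by
    have hψ0 : ψ 0 = p := hφ.implicitFunction_apply_image hrange
    have hgp : HasFDerivAt g (fderiv ℝ g p) (ψ 0) := by rw [hψ0]; exact hg.hasFDerivAt
    exact hgp.comp 0 (hφ.to_implicitFunction hrange).hasFDerivAt
  have hgψ_zero : HasFDerivAt (g ∘ ψ) (0 : φ'.ker →L[ℝ] ℝ) 0 :=
    (hasFDerivAt_const 0 0).congr_of_eventuallyEq (hψ_level.mono fun y hy => hgM hy)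
  simpa using congrArg (fun L => L ⟨v, hv⟩) (hgψ.unique hgψ_zero)

theorem eqOn_derivAlong_zero [CompleteSpace F] {φ h : F → ℝ} {V : F → F} (hφ : ContDiff ℝ 1 φ)
    (hreg : ∀ x, φ x = 0 → fderiv ℝ φ x ≠ 0) (hV : ∀ x, φ x = 0 → fderiv ℝ φ x (V x) = 0)
    (hh : Differentiable ℝ h) (hM : EqOn h 0 (φ ⁻¹' {0})) :
    EqOn (derivAlong V h) 0 (φ ⁻¹' {0}) := fun x hx =>
  (hφ.contDiffAt.hasStrictFDerivAt one_ne_zero).fderiv_apply_eq_zero_of_eqOn_levelSet (hreg x hx)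
    (hh x) (by rwa [show φ x = 0 from hx]) (hV x hx)

theorem eqOn_iterate_derivAlong_zero [CompleteSpace F] {φ h : F → ℝ} {V : F → F}
    (hφ : ContDiff ℝ 1 φ) (hreg : ∀ x, φ x = 0 → fderiv ℝ φ x ≠ 0)
    (hV : ∀ x, φ x = 0 → fderiv ℝ φ x (V x) = 0)
    (hVs : ContDiff ℝ ∞ V) (hh : ContDiff ℝ ∞ h) (hM : EqOn h 0 (φ ⁻¹' {0})) (m : ℕ) :
    ContDiff ℝ ∞ ((derivAlong V)^[m] h) ∧ EqOn ((derivAlong V)^[m] h) 0 (φ ⁻¹' {0}) := by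
  induction m with
  | zero => exact ⟨hh, hM⟩
  | succ m ih =>
    rw [Function.iterate_succ_apply']
    exact ⟨hVs.derivAlong ih.1,
      eqOn_derivAlong_zero hφ hreg hV (ih.1.differentiable (by simp)) ih.2⟩

end LevelSet

section

variable {F κ : Type*} [NormedAddCommGroup F] [NormedSpace ℝ F]

/-- `f` and `g` are the same smooth expression `x ↦ Φ (x, (D i x)ᵢ)` in finitely many members,
with indices in `S`, of the families `D = DX` resp. `D = DY`. -/
def SameJetExpr (DX DY : κ → F → F) (S : Set κ) (f g : F → ℝ) : Prop :=
  ∃ (ι : Type) (_ : Fintype ι) (idx : ι → κ) (Φ : F × (ι → F) → ℝ),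
    ContDiff ℝ ∞ Φ ∧ (∀ i, idx i ∈ S) ∧
      f = (fun x => Φ (x, fun i => DX (idx i) x)) ∧ g = (fun x => Φ (x, fun i => DY (idx i) x))

namespace SameJetExpr

variable {DX DY : κ → F → F} {S T : Set κ} {f g f' g' : F → ℝ}

theorem zero : SameJetExpr DX DY S 0 0 :=
  ⟨Empty, inferInstance, Empty.elim, fun _ => 0, contDiff_const, Empty.rec, rfl, rfl⟩

theorem mono (h : SameJetExpr DX DY S f g) (hST : S ⊆ T) : SameJetExpr DX DY T f g := by
  obtain ⟨ι, _, idx, Φ, hΦ, hidx, hf, hg⟩ := h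
  exact ⟨ι, _, idx, Φ, hΦ, fun i => hST (hidx i), hf, hg⟩

theorem add (h : SameJetExpr DX DY S f g) (h' : SameJetExpr DX DY S f' g') :
    SameJetExpr DX DY S (f + f') (g + g') := by
  obtain ⟨ι, _, idx, Φ, hΦ, hidx, rfl, rfl⟩ := h
  obtain ⟨ι', _, idx', Φ', hΦ', hidx', rfl, rfl⟩ := h'
  have hinl : ContDiff ℝ ∞ fun w : F × (ι ⊕ ι' → F) => (w.1, fun i => w.2 (Sum.inl i)) :=
    contDiff_fst.prodMk (contDiff_pi.2 fun i => (contDiff_apply ℝ F _).comp contDiff_snd)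
  have hinr : ContDiff ℝ ∞ fun w : F × (ι ⊕ ι' → F) => (w.1, fun i => w.2 (Sum.inr i)) :=
    contDiff_fst.prodMk (contDiff_pi.2 fun i => (contDiff_apply ℝ F _).comp contDiff_snd)
  exact ⟨ι ⊕ ι', inferInstance, Sum.elim idx idx',
    fun w => Φ (w.1, fun i => w.2 (Sum.inl i)) + Φ' (w.1, fun i => w.2 (Sum.inr i)),
    (hΦ.comp hinl).add (hΦ'.comp hinr), Sum.rec hidx hidx', rfl, rfl⟩

theorem symm (h : SameJetExpr DX DY S f g) : SameJetExpr DY DX S g f := by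
  obtain ⟨ι, _, idx, Φ, hΦ, hidx, hf, hg⟩ := h
  exact ⟨ι, _, idx, Φ, hΦ, hidx, hg, hf⟩

theorem of_pair {Θ : F × F × F → ℝ} (hΘ : ContDiff ℝ ∞ Θ) {i j : κ} (hi : i ∈ S) (hj : j ∈ S) :
    SameJetExpr DX DY S (fun x => Θ (x, DX i x, DX j x)) (fun x => Θ (x, DY i x, DY j x)) :=
  ⟨Bool, inferInstance, fun b => cond b j i, fun w => Θ (w.1, w.2 false, w.2 true),
    hΘ.comp (contDiff_fst.prodMk (((contDiff_apply ℝ F _).comp contDiff_snd).prodMk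
      ((contDiff_apply ℝ F _).comp contDiff_snd))),
    fun b => by cases b <;> assumption, rfl, rfl⟩

theorem contDiff_left (h : SameJetExpr DX DY S f g) (hDX : ∀ i, ContDiff ℝ ∞ (DX i)) :
    ContDiff ℝ ∞ f := by
  obtain ⟨ι, _, idx, Φ, hΦ, -, rfl, -⟩ := h
  exact hΦ.comp (contDiff_id.prodMk (contDiff_pi.2 fun i => hDX _))

theorem apply_eq (h : SameJetExpr DX DY S f g) {x : F} (hx : ∀ i ∈ S, DX i x = DY i x) :
    f x = g x := by
  obtain ⟨ι, _, idx, Φ, -, hidx, rfl, rfl⟩ := h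
  simp only [hx _ (hidx _)]

theorem derivAlong {V W : F → F} {Ψ : F × F → F} (hΨ : ContDiff ℝ ∞ Ψ) {i₀ : κ} (hi₀ : i₀ ∈ T)
    (hV : ∀ x, V x = Ψ (x, DX i₀ x)) (hW : ∀ x, W x = Ψ (x, DY i₀ x)) {σ : κ → κ}
    (hST : S ⊆ T) (hσ : ∀ i ∈ S, σ i ∈ T)
    (hDXσ : ∀ i ∈ S, ∀ x, fderiv ℝ (DX i) x (V x) = DX (σ i) x)
    (hDYσ : ∀ i ∈ S, ∀ x, fderiv ℝ (DY i) x (W x) = DY (σ i) x)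
    (hDX : ∀ i, ContDiff ℝ ∞ (DX i)) (hDY : ∀ i, ContDiff ℝ ∞ (DY i))
    (h : SameJetExpr DX DY S f g) :
    SameJetExpr DX DY T (_root_.derivAlong V f) (_root_.derivAlong W g) := by
  obtain ⟨ι, _, idx, Φ, hΦ, hidx, rfl, rfl⟩ := h
  let idx' : Option (ι ⊕ ι) → κ := fun o => o.elim i₀ (Sum.elim idx (σ ∘ idx))
  let Φ' : F × (Option (ι ⊕ ι) → F) → ℝ := fun w =>
    fderiv ℝ Φ (w.1, fun i => w.2 (some (.inl i))) (Ψ (w.1, w.2 none), fun i => w.2 (some (.inr i)))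
  have hΦ' : ContDiff ℝ ∞ Φ' := by
    have hcoord : ∀ o, ContDiff ℝ ∞ fun w : F × (Option (ι ⊕ ι) → F) => w.2 o :=
      fun o => (contDiff_apply ℝ F o).comp contDiff_snd
    exact ((hΦ.fderiv_right (m := ∞) (by simp)).comp
      (contDiff_fst.prodMk (contDiff_pi.2 fun i => hcoord _))).clm_apply
      ((hΨ.comp (contDiff_fst.prodMk (hcoord none))).prodMk (contDiff_pi.2 fun i => hcoord _))
  have hchain : ∀ (D : κ → F → F) (U : F → F), (∀ x, U x = Ψ (x, D i₀ x)) →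
      (∀ i ∈ S, ∀ x, fderiv ℝ (D i) x (U x) = D (σ i) x) → (∀ i, ContDiff ℝ ∞ (D i)) →
      _root_.derivAlong U (fun x => Φ (x, fun i => D (idx i) x))
        = fun x => Φ' (x, fun o => D (idx' o) x) := by
    intro D U hU hDσ hD
    funext x
    rw [derivAlong_comp_prod_pi (hΦ.differentiable (by simp))
      (fun i => (hD _).differentiable (by simp))]
    have hDσ' : ∀ i, fderiv ℝ (D (idx i)) x (U x) = D (σ (idx i)) x := fun i => hDσ _ (hidx i) x
    simp only [hDσ']
    rw [hU x]
    rfl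
  refine ⟨Option (ι ⊕ ι), inferInstance, idx', Φ', hΦ', ?_, hchain DX V hV hDXσ hDX,
    hchain DY W hW hDYσ hDY⟩
  rintro (_ | i | i)
  exacts [hi₀, hST (hidx i), hσ _ (hidx i)]

theorem derivAlong_sub_clm_apply {V W : F → F} {Ψ : F × F → F} (hΨ : ContDiff ℝ ∞ Ψ) {i₀ : κ}
    (hi₀ : i₀ ∈ T) (hV : ∀ x, V x = Ψ (x, DX i₀ x)) (hW : ∀ x, W x = Ψ (x, DY i₀ x))
    {σ : κ → κ} (hST : S ⊆ T) (hσ : ∀ i ∈ S, σ i ∈ T)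
    (hDXσ : ∀ i ∈ T, ∀ x, fderiv ℝ (DX i) x (V x) = DX (σ i) x)
    (hDYσ : ∀ i ∈ T, ∀ x, fderiv ℝ (DY i) x (W x) = DY (σ i) x)
    (hDX : ∀ i, ContDiff ℝ ∞ (DX i)) (hDY : ∀ i, ContDiff ℝ ∞ (DY i))
    {c : F → F →L[ℝ] ℝ} (hc : ContDiff ℝ ∞ c) {j : κ} (hj : j ∈ T) {HX HY : F → ℝ}
    (h : SameJetExpr DX DY S (HX - fun x => c x (DX j x)) (HY - fun x => c x (DY j x))) :
    SameJetExpr DX DY T (_root_.derivAlong V HX - fun x => c x (DX (σ j) x))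
      (_root_.derivAlong W HY - fun x => c x (DY (σ j) x)) := by
  have hc' : Differentiable ℝ c := hc.differentiable (by simp)
  rw [_root_.derivAlong_sub_clm_apply hc' ((hDX j).differentiable (by simp))
      ((h.contDiff_left hDX).differentiable (by simp)) fun x => (hDXσ j hj x).symm,
    _root_.derivAlong_sub_clm_apply hc' ((hDY j).differentiable (by simp))
      ((h.symm.contDiff_left hDY).differentiable (by simp)) fun x => (hDYσ j hj x).symm]
  have hcorr : SameJetExpr DX DY T (fun x => fderiv ℝ c x (V x) (DX j x))
      (fun x => fderiv ℝ c x (W x) (DY j x)) := by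
    simp only [hV, hW]
    exact of_pair (Θ := fun w => fderiv ℝ c w.1 (Ψ (w.1, w.2.1)) w.2.2)
      (((hc.fderiv_right (m := ∞) (by simp)).comp contDiff_fst).clm_apply
        (hΨ.comp (contDiff_fst.prodMk (contDiff_fst.comp contDiff_snd))) |>.clm_apply
        (contDiff_snd.comp contDiff_snd)) hi₀ hj
  exact (h.derivAlong hΨ hi₀ hV hW hST hσ (fun i hi => hDXσ i (hST hi))
    (fun i hi => hDYσ i (hST hi)) hDX hDY).add hcorr

end SameJetExpr

end

section Jets

variable {n : ℕ} {J : E n → E n →L[ℝ] E n} {φ : E n → ℝ} {c : E n → E n →L[ℝ] ℝ}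
  {X Y : E n → E n}

def jets (J : E n → E n →L[ℝ] E n) (X : E n → E n) : ℕ × ℕ → E n → E n :=
  fun i => Dpq J X i.1 i.2

/-- The scalar counterpart `L_{JX}^q L_X^p (c(X))` of `D^{p,q}_X X`, where `L_V` is the
derivative along `V`. -/
def scalarDpq (J : E n → E n →L[ℝ] E n) (c : E n → E n →L[ℝ] ℝ) (X : E n → E n) (p q : ℕ) :
    E n → ℝ :=
  (derivAlong (JVF J X))^[q] ((derivAlong X)^[p] fun x => c x (X x))

theorem Dpq_succ_zero (p : ℕ) : Dpq J X (p + 1) 0 = nabla X (Dpq J X p 0) :=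
  Function.iterate_succ_apply' _ _ _

theorem Dpq_succ_right (p q : ℕ) : Dpq J X p (q + 1) = nabla (JVF J X) (Dpq J X p q) :=
  Function.iterate_succ_apply' _ _ _

theorem scalarDpq_succ_zero (p : ℕ) :
    scalarDpq J c X (p + 1) 0 = derivAlong X (scalarDpq J c X p 0) :=
  Function.iterate_succ_apply' _ _ _

theorem scalarDpq_succ_right (p q : ℕ) :
    scalarDpq J c X p (q + 1) = derivAlong (JVF J X) (scalarDpq J c X p q) :=
  Function.iterate_succ_apply' _ _ _

theorem contDiff_nabla {V W : E n → E n} (hV : ContDiff ℝ ∞ V) (hW : ContDiff ℝ ∞ W) :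
    ContDiff ℝ ∞ (nabla V W) :=
  (hW.fderiv_right (m := ∞) (by simp)).clm_apply hV

theorem contDiff_jets (hJ : ContDiff ℝ ∞ J) (hX : ContDiff ℝ ∞ X) (i : ℕ × ℕ) :
    ContDiff ℝ ∞ (jets J X i) := by
  obtain ⟨p, q⟩ := i
  induction q with
  | zero =>
    induction p with
    | zero => exact hX
    | succ p ih =>
      rw [jets, Dpq_succ_zero]
      exact contDiff_nabla hX ih
  | succ q ih =>
    rw [jets, Dpq_succ_right]
    exact contDiff_nabla (hJ.clm_apply hX) ih

theorem fderiv_jets_apply_self (a : ℕ) (x : E n) :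
    fderiv ℝ (jets J X (a, 0)) x (X x) = jets J X (a + 1, 0) x :=
  (congrFun (Dpq_succ_zero a) x).symm

theorem fderiv_jets_apply_JVF (i : ℕ × ℕ) (x : E n) :
    fderiv ℝ (jets J X i) x (J x (X x)) = jets J X (i.1, i.2 + 1) x :=
  (congrFun (Dpq_succ_right i.1 i.2) x).symm

section
variable (hJ : ContDiff ℝ ∞ J) (hX : ContDiff ℝ ∞ X) (hY : ContDiff ℝ ∞ Y) (hc : ContDiff ℝ ∞ c)
include hJ hX hY hc

theorem sameJetExpr_scalarDpq_sub_Dpq_zero (p : ℕ) :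
    SameJetExpr (jets J X) (jets J Y) {i | i.2 = 0 ∧ i.1 < p}
      (scalarDpq J c X p 0 - fun x => c x (Dpq J X p 0 x))
      (scalarDpq J c Y p 0 - fun x => c x (Dpq J Y p 0 x)) := by
  induction p with
  | zero => convert SameJetExpr.zero using 1 <;> exact sub_self _
  | succ p ih =>
    rw [scalarDpq_succ_zero, scalarDpq_succ_zero]
    refine ih.derivAlong_sub_clm_apply (T := {i | i.2 = 0 ∧ i.1 < p + 1}) (Ψ := Prod.snd)
      (i₀ := (0, 0)) (σ := fun i => (i.1 + 1, i.2)) (j := (p, 0)) contDiff_snd ⟨rfl, p.succ_pos⟩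
      (fun _ => rfl) (fun _ => rfl) (fun _ hi => ⟨hi.1, Nat.lt_succ_of_lt hi.2⟩)
      (fun _ hi => ⟨hi.1, Nat.succ_lt_succ hi.2⟩) ?_ ?_
      (contDiff_jets hJ hX) (contDiff_jets hJ hY) hc ⟨rfl, p.lt_succ_self⟩
    all_goals
      rintro ⟨a, b⟩ ⟨rfl, -⟩ x
      exact fderiv_jets_apply_self a x

theorem sameJetExpr_scalarDpq_sub_Dpq (p q : ℕ) :
    SameJetExpr (jets J X) (jets J Y) {i | i.1 + i.2 < p + q}
      (scalarDpq J c X p q - fun x => c x (Dpq J X p q x))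
      (scalarDpq J c Y p q - fun x => c x (Dpq J Y p q x)) := by
  induction q with
  | zero =>
    exact (sameJetExpr_scalarDpq_sub_Dpq_zero hJ hX hY hc p).mono fun i hi => by
      simp only [Set.mem_ofPred_eq] at hi ⊢
      omega
  | succ q ih =>
    rw [scalarDpq_succ_right, scalarDpq_succ_right]
    refine ih.derivAlong_sub_clm_apply (Ψ := fun w => J w.1 w.2) (i₀ := (0, 0))
      (σ := fun i => (i.1, i.2 + 1)) (j := (p, q)) ((hJ.comp contDiff_fst).clm_apply contDiff_snd)
      ?_ (fun _ => rfl) (fun _ => rfl) (fun i hi => ?_) (fun i hi => ?_)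
      (fun i _ => fderiv_jets_apply_JVF i) (fun i _ => fderiv_jets_apply_JVF i)
      (contDiff_jets hJ hX) (contDiff_jets hJ hY) hc ?_
    all_goals
      simp only [Set.mem_ofPred_eq] at *
      omega

end

theorem eqOn_scalarDpq_zero (hφ : ContDiff ℝ 1 φ) (hreg : ∀ x, φ x = 0 → fderiv ℝ φ x ≠ 0)
    (hJ : ContDiff ℝ ∞ J) (hX : JTangent J φ X) (hc : ContDiff ℝ ∞ c)
    (hcX : ∀ x, φ x = 0 → c x (X x) = 0) (p q : ℕ) :
    EqOn (scalarDpq J c X p q) 0 (φ ⁻¹' {0}) := by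
  obtain ⟨hXs, hXt⟩ := hX
  obtain ⟨hps, hp0⟩ := eqOn_iterate_derivAlong_zero hφ hreg (fun x hx => (hXt x hx).1) hXs
    (hc.clm_apply hXs) hcX p
  exact (eqOn_iterate_derivAlong_zero hφ hreg (fun x hx => (hXt x hx).2) (hJ.clm_apply hXs)
    hps hp0 q).2

theorem apply_Dpq_eq_of_jets_eq (hφ : ContDiff ℝ 1 φ) (hreg : ∀ x, φ x = 0 → fderiv ℝ φ x ≠ 0)
    (hJ : ContDiff ℝ ∞ J) (hX : JTangent J φ X) (hY : JTangent J φ Y) (hc : ContDiff ℝ ∞ c)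
    (hcX : ∀ x, φ x = 0 → c x (X x) = 0) (hcY : ∀ x, φ x = 0 → c x (Y x) = 0)
    {x₀ : E n} (hx₀ : φ x₀ = 0) {p q : ℕ}
    (hjet : ∀ a b, a + b < p + q → Dpq J X a b x₀ = Dpq J Y a b x₀) :
    c x₀ (Dpq J X p q x₀) = c x₀ (Dpq J Y p q x₀) := by
  have hrem := (sameJetExpr_scalarDpq_sub_Dpq hJ hX.1 hY.1 hc p q).apply_eq
    fun i hi => hjet i.1 i.2 hi
  have hX₀ := eqOn_scalarDpq_zero hφ hreg hJ hX hc hcX p q hx₀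
  have hY₀ := eqOn_scalarDpq_zero hφ hreg hJ hY hc hcY p q hx₀
  simp only [Pi.sub_apply, Pi.zero_apply] at hrem hX₀ hY₀
  linarith

end Jets

end

theorem jet_difference_tangent_general {n : ℕ} (J : E n → (E n →L[ℝ] E n)) (φ : E n → ℝ)
    (hJsmooth : ContDiff ℝ (⊤ : ℕ∞) J)
    (hφsmooth : ContDiff ℝ (⊤ : ℕ∞) φ) (hφ0 : φ 0 = 0)
    (hreg : ∀ x, φ x = 0 → fderiv ℝ φ x ≠ 0)
    (k : ℕ) (X Y : E n → E n) (hX : JTangent J φ X) (hY : JTangent J φ Y)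
    (hjet : ∀ a b : ℕ, a + b ≤ k → Dpq J X a b 0 = Dpq J Y a b 0) :
    ∀ p q : ℕ, p + q = k + 1 → InTJ J φ 0 (Dpq J X p q 0 - Dpq J Y p q 0) := by
  intro p q hpq
  have hjet' : ∀ a b, a + b < p + q → Dpq J X a b 0 = Dpq J Y a b 0 :=
    fun a b hab => hjet a b (by omega)
  have hφ1 : ContDiff ℝ 1 φ := hφsmooth.of_le (by simp)
  have hdφ : ContDiff ℝ ∞ (fderiv ℝ φ) := hφsmooth.fderiv_right (m := ∞) (by simp)
  constructor
  · rw [map_sub, sub_eq_zero]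
    exact apply_Dpq_eq_of_jets_eq hφ1 hreg hJsmooth hX hY hdφ (fun x hx => (hX.2 x hx).1)
      (fun x hx => (hY.2 x hx).1) hφ0 hjet'
  · rw [map_sub, map_sub, sub_eq_zero]
    exact apply_Dpq_eq_of_jets_eq (c := fun x => (fderiv ℝ φ x).comp (J x)) hφ1 hreg hJsmooth
      hX hY (hdφ.clm_comp hJsmooth) (fun x hx => (hX.2 x hx).2) (fun x hx => (hY.2 x hx).2)
      hφ0 hjet'

/-- if two `J`-tangent vector fields have the same derivatives
`D^{a,b} (0)` for `a + b ≤ k`, then for `p + q = k + 1` the difference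
`D^{p,q}_X X(0) − D^{p,q}_Y Y(0)` lies in `T^J_0 M`. -/
theorem jet_difference_tangent {n : ℕ} (J : E n → (E n →L[ℝ] E n)) (φ : E n → ℝ)
    (hJsmooth : ContDiff ℝ (⊤ : ℕ∞) J) (hJ2 : ∀ x v, J x (J x v) = -v)
    (hJ0 : ∀ v : E n, J 0 v = Complex.I • v)
    (hφsmooth : ContDiff ℝ (⊤ : ℕ∞) φ) (hφ0 : φ 0 = 0)
    (hreg : ∀ x, φ x = 0 → fderiv ℝ φ x ≠ 0)
    (k : ℕ) (X Y : E n → E n) (hX : JTangent J φ X) (hY : JTangent J φ Y)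
    (hjet : ∀ a b : ℕ, a + b ≤ k → Dpq J X a b 0 = Dpq J Y a b 0) :
    ∀ p q : ℕ, p + q = k + 1 → InTJ J φ 0 (Dpq J X p q 0 - Dpq J Y p q 0) :=
  jet_difference_tangent_general J φ hJsmooth hφsmooth hφ0 hreg k X Y hX hY hjet
end

section
/- Let X be a J-tangent vector field and let k ≥ 1. The following are equivalent: (a) X commutes at 0 up to order k, i.e. for every m ≤ k, every choice X₁, …, X_m ∈ {X, JX}, and every permutation σ of {1, …, m}, one has (X_{σ(1)}·X_{σ(2)}·⋯·X_{σ(m)})(0) = (X₁·X₂·⋯·X_m)(0); (b) every iterated Lie bracket of the vector fields X and JX with at least 2 and at most k factors vanishes at 0. -/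
open Complex Filter Asymptotics Metric Topology

/-!
The standard connection of `ℝ^{2n}` is torsion free and flat: on smooth fields
`∇_{[Y,Z]} = ∇_Y ∇_Z - ∇_Z ∇_Y`, by symmetry of second derivatives.

If the iterated brackets with at most `k` factors vanish at `0`, then by this identity so do
their derivatives `∇_{u₁} ⋯ ∇_{u_j} W` and `∇_{u₁} ⋯ ∇_{u_j} ∇_W Z` of total order at most `k`.
Swapping two adjacent factors of a product changes it by a term of this form, so products are
permutation invariant at `0`.

Conversely, if products of at most `k` factors are permutation invariant at `0`, then the value
at `0` of a derivative of a product along a word only depends on the multiset of all factors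
involved. By induction on the bracket, an iterated bracket `W` with leaves `l` then behaves to
order `k` at `0` like `ε` times the product of `l`, both as a field and through `∇_W`; the two
terms of a bracket give the same product with coefficients `ε₁ε₂` and `ε₂ε₁`, so `ε = 0` as soon
as there are two leaves.
-/

open scoped ContDiff

section Calculus

variable {n : ℕ} {X Y Z F G : E n → E n}

lemma contDiff_nabla_s13 (hX : ContDiff ℝ ∞ X) (hY : ContDiff ℝ ∞ Y) :
    ContDiff ℝ ∞ (nabla X Y) :=
  (hY.fderiv_right (by norm_num)).clm_apply hX

lemma contDiff_lie (hX : ContDiff ℝ ∞ X) (hY : ContDiff ℝ ∞ Y) :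
    ContDiff ℝ ∞ (lie X Y) :=
  (contDiff_nabla_s13 hX hY).sub (contDiff_nabla_s13 hY hX)

lemma lie_eq_sub (X Y : E n → E n) : lie X Y = nabla X Y - nabla Y X := rfl

lemma nabla_sub (hF : Differentiable ℝ F) (hG : Differentiable ℝ G) :
    nabla X (F - G) = nabla X F - nabla X G := by
  funext p
  simp [nabla, fderiv_sub (hF p) (hG p)]

lemma nabla_nabla_apply (hY : ContDiff ℝ ∞ Y) (hZ : ContDiff ℝ ∞ Z) (p : E n) :
    nabla X (nabla Y Z) p = fderiv ℝ (fderiv ℝ Z) p (X p) (Y p) + nabla (nabla X Y) Z p := by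
  have hdZ : DifferentiableAt ℝ (fderiv ℝ Z) p :=
    ((hZ.fderiv_right (m := ∞) (by norm_num)).differentiable (by simp)).differentiableAt
  rw [nabla, show nabla Y Z = fun q => fderiv ℝ Z q (Y q) from rfl,
    fderiv_clm_apply hdZ ((hY.differentiable (by simp)) p)]
  simp [nabla, add_comm]

lemma nabla_lie (hX : ContDiff ℝ ∞ X) (hY : ContDiff ℝ ∞ Y) (hZ : ContDiff ℝ ∞ Z) :
    nabla (lie X Y) Z = nabla X (nabla Y Z) - nabla Y (nabla X Z) := by
  funext p
  have hsymm : IsSymmSndFDerivAt ℝ Z p :=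
    hZ.contDiffAt.isSymmSndFDerivAt <| by
      rw [minSmoothness_of_isRCLikeNormedField]; exact WithTop.coe_le_coe.mpr le_top
  rw [Pi.sub_apply, nabla_nabla_apply hY hZ, nabla_nabla_apply hX hZ, hsymm (X p) (Y p)]
  simp only [nabla, lie_eq_sub, Pi.sub_apply, map_sub]
  abel

end Calculus

section Words

variable {n : ℕ} {F G : E n → E n} {u w : List (E n → E n)}

lemma contDiff_foldr_nabla (hu : ∀ f ∈ u, ContDiff ℝ ∞ f) (hF : ContDiff ℝ ∞ F) :
    ContDiff ℝ ∞ (u.foldr nabla F) := by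
  induction u with
  | nil => exact hF
  | cons C v ih =>
    exact contDiff_nabla_s13 (hu C (by simp)) (ih fun f hf => hu f (by simp [hf]))

lemma foldr_nabla_sub (hu : ∀ f ∈ u, ContDiff ℝ ∞ f) (hF : ContDiff ℝ ∞ F)
    (hG : ContDiff ℝ ∞ G) : u.foldr nabla (F - G) = u.foldr nabla F - u.foldr nabla G := by
  induction u with
  | nil => rfl
  | cons C v ih =>
    have hv : ∀ f ∈ v, ContDiff ℝ ∞ f := fun f hf => hu f (by simp [hf])
    rw [List.foldr_cons, ih hv,
      nabla_sub ((contDiff_foldr_nabla hv hF).differentiable (by simp))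
        ((contDiff_foldr_nabla hv hG).differentiable (by simp))]
    rfl

lemma prodVF_cons (C : E n → E n) (hw : w ≠ []) : prodVF (C :: w) = nabla C (prodVF w) := by
  cases w with
  | nil => exact absurd rfl hw
  | cons Y r => rfl

lemma foldr_nabla_prodVF (u : List (E n → E n)) (hw : w ≠ []) :
    u.foldr nabla (prodVF w) = prodVF (u ++ w) := by
  induction u with
  | nil => rfl
  | cons C v ih => rw [List.foldr_cons, ih, List.cons_append, prodVF_cons C (by simp [hw])]

lemma contDiff_prodVF (hw : ∀ f ∈ w, ContDiff ℝ ∞ f) : ContDiff ℝ ∞ (prodVF w) := by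
  induction w with
  | nil => exact contDiff_const
  | cons C r ih =>
    rcases eq_or_ne r [] with rfl | hr
    · exact hw C (by simp)
    · rw [prodVF_cons C hr]
      exact contDiff_nabla_s13 (hw C (by simp)) (ih fun f hf => hw f (by simp [hf]))

end Words

section Brackets

variable {n : ℕ} {S : Set (E n → E n)} {k m : ℕ} {a b ε₁ ε₂ : ℝ}
  {c c' l₁ l₂ : List (E n → E n)} {x W Z Z' B₁ B₂ : E n → E n}

lemma IterBrk.contDiff (hS : ∀ f ∈ S, ContDiff ℝ ∞ f) (hW : IterBrk S m W) :
    ContDiff ℝ ∞ W := by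
  induction hW with
  | base W hW => exact hS W hW
  | brk _ _ ih₁ ih₂ => exact contDiff_lie ih₁ ih₂

def CommutesUpTo (S : Set (E n → E n)) (k : ℕ) : Prop :=
  ∀ l : List (E n → E n), l.length ≤ k → (∀ W ∈ l, W ∈ S) →
    ∀ l' : List (E n → E n), l'.Perm l → prodVF l' 0 = prodVF l 0

def BracketsVanishUpTo (S : Set (E n → E n)) (k : ℕ) : Prop :=
  ∀ (m : ℕ) (W : E n → E n), 2 ≤ m → m ≤ k → IterBrk S m W → W 0 = 0

/-- The derivatives of `Z` at `0` along words `u` in `S` of order at most `k` are those of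
`a • prodVF c`. -/
def LikeProdUpTo (S : Set (E n → E n)) (k : ℕ) (a : ℝ) (c : List (E n → E n))
    (Z : E n → E n) : Prop :=
  ∀ u : List (E n → E n), (∀ f ∈ u, f ∈ S) → u.length + c.length ≤ k →
    u.foldr nabla Z 0 = a • prodVF (u ++ c) 0

def NablaLikeProdUpTo (S : Set (E n → E n)) (k : ℕ) (ε : ℝ) (l : List (E n → E n))
    (W : E n → E n) : Prop :=
  ∀ ⦃a : ℝ⦄ ⦃c : List (E n → E n)⦄ ⦃Z : E n → E n⦄, ContDiff ℝ ∞ Z → (∀ f ∈ c, f ∈ S) →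
    LikeProdUpTo S k a c Z → LikeProdUpTo S k (ε * a) (l ++ c) (nabla W Z)

lemma likeProdUpTo_self : LikeProdUpTo S k 1 [x] x := fun u _ _ => by
  rw [one_smul, ← foldr_nabla_prodVF u (List.cons_ne_nil x [])]
  rfl

lemma LikeProdUpTo.nabla (hx : x ∈ S) (h : LikeProdUpTo S k a c Z) :
    LikeProdUpTo S k a (x :: c) (nabla x Z) := by
  intro u hu hlen
  have h' := h (u ++ [x]) (List.forall_mem_append.mpr ⟨hu, by simpa using hx⟩)
    (by simp only [List.length_append, List.length_cons, List.length_nil] at hlen ⊢; omega)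
  simpa using h'

lemma LikeProdUpTo.sub (hS : ∀ f ∈ S, ContDiff ℝ ∞ f) (hcomm : CommutesUpTo S k)
    (hc : ∀ f ∈ c, f ∈ S) (hperm : c'.Perm c) (hZ : ContDiff ℝ ∞ Z) (hZ' : ContDiff ℝ ∞ Z')
    (h : LikeProdUpTo S k a c Z) (h' : LikeProdUpTo S k b c' Z') :
    LikeProdUpTo S k (a - b) c (Z - Z') := by
  intro u hu hlen
  have hprod : prodVF (u ++ c') 0 = prodVF (u ++ c) 0 :=
    hcomm _ (by simpa using hlen) (List.forall_mem_append.mpr ⟨hu, hc⟩) _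
      (hperm.append_left u)
  rw [foldr_nabla_sub (fun f hf => hS f (hu f hf)) hZ hZ', Pi.sub_apply, h u hu hlen,
    h' u hu (hperm.length_eq ▸ hlen), hprod, sub_smul]

lemma nablaLikeProdUpTo_self (hx : x ∈ S) : NablaLikeProdUpTo S k 1 [x] x :=
  fun _ _ _ _ _ hZ => by simpa using hZ.nabla hx

lemma likeProdUpTo_lie (hS : ∀ f ∈ S, ContDiff ℝ ∞ f) (hcomm : CommutesUpTo S k)
    (hl₁ : ∀ f ∈ l₁, f ∈ S) (hl₂ : ∀ f ∈ l₂, f ∈ S)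
    (hsm₁ : ContDiff ℝ ∞ B₁) (hsm₂ : ContDiff ℝ ∞ B₂)
    (hB₁ : LikeProdUpTo S k ε₁ l₁ B₁) (hB₂ : LikeProdUpTo S k ε₂ l₂ B₂)
    (hD₁ : NablaLikeProdUpTo S k ε₁ l₁ B₁) (hD₂ : NablaLikeProdUpTo S k ε₂ l₂ B₂) :
    LikeProdUpTo S k 0 (l₁ ++ l₂) (lie B₁ B₂) := by
  have h := (hD₁ hsm₂ hl₂ hB₂).sub hS hcomm (List.forall_mem_append.mpr ⟨hl₁, hl₂⟩)
    List.perm_append_comm (contDiff_nabla_s13 hsm₁ hsm₂) (contDiff_nabla_s13 hsm₂ hsm₁)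
    (hD₂ hsm₁ hl₁ hB₁)
  rwa [mul_comm, sub_self, ← lie_eq_sub] at h

lemma nablaLikeProdUpTo_lie (hS : ∀ f ∈ S, ContDiff ℝ ∞ f) (hcomm : CommutesUpTo S k)
    (hl₁ : ∀ f ∈ l₁, f ∈ S) (hl₂ : ∀ f ∈ l₂, f ∈ S)
    (hsm₁ : ContDiff ℝ ∞ B₁) (hsm₂ : ContDiff ℝ ∞ B₂)
    (hD₁ : NablaLikeProdUpTo S k ε₁ l₁ B₁) (hD₂ : NablaLikeProdUpTo S k ε₂ l₂ B₂) :
    NablaLikeProdUpTo S k 0 (l₁ ++ l₂) (lie B₁ B₂) := by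
  intro a c Z hZ hc hZc
  have hl₁c : ∀ f ∈ l₁ ++ c, f ∈ S := List.forall_mem_append.mpr ⟨hl₁, hc⟩
  have hl₂c : ∀ f ∈ l₂ ++ c, f ∈ S := List.forall_mem_append.mpr ⟨hl₂, hc⟩
  have h := (hD₁ (contDiff_nabla_s13 hsm₂ hZ) hl₂c (hD₂ hZ hc hZc)).sub hS hcomm
    (List.forall_mem_append.mpr ⟨hl₁, hl₂c⟩) (List.perm_append_comm_assoc _ _ _)
    (contDiff_nabla_s13 hsm₁ (contDiff_nabla_s13 hsm₂ hZ))
    (contDiff_nabla_s13 hsm₂ (contDiff_nabla_s13 hsm₁ hZ))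
    (hD₂ (contDiff_nabla_s13 hsm₁ hZ) hl₁c (hD₁ hZ hc hZc))
  rw [List.append_assoc, nabla_lie hsm₁ hsm₂ hZ]
  convert h using 1
  ring

lemma IterBrk.exists_likeProdUpTo (hS : ∀ f ∈ S, ContDiff ℝ ∞ f) (hcomm : CommutesUpTo S k)
    (hW : IterBrk S m W) :
    ∃ (l : List (E n → E n)) (ε : ℝ), l.length = m ∧ (∀ f ∈ l, f ∈ S) ∧ (2 ≤ m → ε = 0) ∧
      LikeProdUpTo S k ε l W ∧ NablaLikeProdUpTo S k ε l W := by
  induction hW with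
  | base x hx =>
    exact ⟨[x], 1, rfl, by simpa using hx, by omega, likeProdUpTo_self,
      nablaLikeProdUpTo_self hx⟩
  | brk h₁ h₂ ih₁ ih₂ =>
    obtain ⟨l₁, ε₁, hlen₁, hl₁, -, hB₁, hD₁⟩ := ih₁
    obtain ⟨l₂, ε₂, hlen₂, hl₂, -, hB₂, hD₂⟩ := ih₂
    have hsm₁ := h₁.contDiff hS
    have hsm₂ := h₂.contDiff hS
    exact ⟨l₁ ++ l₂, 0, by simp [hlen₁, hlen₂], List.forall_mem_append.mpr ⟨hl₁, hl₂⟩,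
      fun _ => rfl, likeProdUpTo_lie hS hcomm hl₁ hl₂ hsm₁ hsm₂ hB₁ hB₂ hD₁ hD₂,
      nablaLikeProdUpTo_lie hS hcomm hl₁ hl₂ hsm₁ hsm₂ hD₁ hD₂⟩

lemma CommutesUpTo.bracketsVanishUpTo (hS : ∀ f ∈ S, ContDiff ℝ ∞ f)
    (hcomm : CommutesUpTo S k) : BracketsVanishUpTo S k := by
  intro m W h2 hmk hW
  obtain ⟨l, ε, hlen, -, hε, hWl, -⟩ := hW.exists_likeProdUpTo hS hcomm
  simpa [hε h2] using hWl [] (by simp) (by simpa [hlen])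

lemma IterBrk.foldr_nabla_eq_zero (hS : ∀ f ∈ S, ContDiff ℝ ∞ f)
    (hvan : BracketsVanishUpTo S k) {u : List (E n → E n)} (hu : ∀ f ∈ u, f ∈ S)
    (hW : IterBrk S m W) (h2 : 2 ≤ m) (hk : u.length + m ≤ k) :
    u.foldr nabla W 0 = 0 ∧ ∀ Z, ContDiff ℝ ∞ Z → u.foldr nabla (nabla W Z) 0 = 0 := by
  induction u using List.reverseRecOn generalizing m W with
  | nil =>
    have hW0 : W 0 = 0 := hvan m W h2 (by simpa using hk) hW
    exact ⟨hW0, fun Z _ => by simp [nabla, hW0]⟩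
  | append_singleton u C ih =>
    have hC : C ∈ S := hu C (by simp)
    have hu' : ∀ f ∈ u, f ∈ S := fun f hf => hu f (by simp [hf])
    have hsmu : ∀ f ∈ u, ContDiff ℝ ∞ f := fun f hf => hS f (hu' f hf)
    have hsmC := hS C hC
    have hsmW := hW.contDiff hS
    have hlen : u.length + 1 + m ≤ k := by simpa using hk
    have hlie := ih hu' (IterBrk.brk (IterBrk.base C hC) hW) (by omega) (by omega)
    have hWu := ih hu' hW h2 (by omega)
    refine ⟨?_, fun Z hZ => ?_⟩
    · have h := hlie.1
      rw [lie_eq_sub, foldr_nabla_sub hsmu (contDiff_nabla_s13 hsmC hsmW) (contDiff_nabla_s13 hsmW hsmC),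
        Pi.sub_apply, sub_eq_zero, hWu.2 C hsmC] at h
      simpa using h
    · have h := hlie.2 Z hZ
      rw [nabla_lie hsmC hsmW hZ,
        foldr_nabla_sub hsmu (contDiff_nabla_s13 hsmC (contDiff_nabla_s13 hsmW hZ))
          (contDiff_nabla_s13 hsmW (contDiff_nabla_s13 hsmC hZ)),
        Pi.sub_apply, sub_eq_zero, hWu.2 _ (contDiff_nabla_s13 hsmC hZ)] at h
      simpa using h

lemma BracketsVanishUpTo.prodVF_append_perm (hS : ∀ f ∈ S, ContDiff ℝ ∞ f)
    (hvan : BracketsVanishUpTo S k) {l₁ l₂ : List (E n → E n)} (hperm : l₁.Perm l₂) :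
    ∀ {u : List (E n → E n)}, (∀ f ∈ u, f ∈ S) → (∀ f ∈ l₁, f ∈ S) →
      u.length + l₁.length ≤ k → prodVF (u ++ l₁) 0 = prodVF (u ++ l₂) 0 := by
  induction hperm with
  | nil => intros; rfl
  | cons x _ ih =>
    intro u hu hl hk
    have h := ih (u := u ++ [x])
      (List.forall_mem_append.mpr ⟨hu, by simpa using hl x (by simp)⟩)
      (fun f hf => hl f (by simp [hf])) (by simp at hk ⊢; omega)
    simpa using h
  | swap x y l =>
    intro u hu hl hk
    have hsmu : ∀ f ∈ u, ContDiff ℝ ∞ f := fun f hf => hS f (hu f hf)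
    have hsml : ∀ f ∈ l, ContDiff ℝ ∞ f := fun f hf => hS f (hl f (by simp [hf]))
    have hx := hl x (by simp)
    have hy := hl y (by simp)
    have hbrk : IterBrk S (1 + 1) (lie y x) := .brk (.base y hy) (.base x hx)
    have hk' : u.length + (1 + 1) ≤ k := by simp only [List.length_cons] at hk; omega
    have hsm : ∀ a b, a ∈ S → b ∈ S → ContDiff ℝ ∞ (prodVF (a :: b :: l)) :=
      fun a b ha hb => contDiff_prodVF (by simpa using ⟨hS a ha, hS b hb, hsml⟩)
    rw [← foldr_nabla_prodVF u (List.cons_ne_nil _ _),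
      ← foldr_nabla_prodVF u (List.cons_ne_nil _ _), ← sub_eq_zero, ← Pi.sub_apply,
      ← foldr_nabla_sub hsmu (hsm y x hy hx) (hsm x y hx hy)]
    rcases eq_or_ne l [] with rfl | hl
    · exact (hbrk.foldr_nabla_eq_zero hS hvan hu le_rfl hk').1
    · rw [prodVF_cons y (List.cons_ne_nil _ _), prodVF_cons x hl,
        prodVF_cons x (List.cons_ne_nil _ _), prodVF_cons y hl,
        ← nabla_lie (hS y hy) (hS x hx) (contDiff_prodVF hsml)]
      exact (hbrk.foldr_nabla_eq_zero hS hvan hu le_rfl hk').2 _ (contDiff_prodVF hsml)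
  | trans h₁₂ _ ih₁ ih₂ =>
    intro u hu hl hk
    exact (ih₁ hu hl hk).trans
      (ih₂ hu (fun f hf => hl f (h₁₂.symm.subset hf)) (h₁₂.length_eq ▸ hk))

lemma BracketsVanishUpTo.commutesUpTo (hS : ∀ f ∈ S, ContDiff ℝ ∞ f)
    (hvan : BracketsVanishUpTo S k) : CommutesUpTo S k := fun _ hlen hl _ hperm =>
  hvan.prodVF_append_perm hS hperm (u := []) (by simp) (fun f hf => hl f (hperm.subset hf))
    (by simpa [hperm.length_eq] using hlen)

theorem commutesUpTo_iff_bracketsVanishUpTo (hS : ∀ f ∈ S, ContDiff ℝ ∞ f) :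
    CommutesUpTo S k ↔ BracketsVanishUpTo S k :=
  ⟨CommutesUpTo.bracketsVanishUpTo hS, BracketsVanishUpTo.commutesUpTo hS⟩

end Brackets

theorem commutes_iff_brackets_vanish_general {n : ℕ} (J : E n → (E n →L[ℝ] E n)) (φ : E n → ℝ)
    (hJsmooth : ContDiff ℝ (⊤ : ℕ∞) J)
    (X : E n → E n) (hX : JTangent J φ X) (k : ℕ) :
    (∀ l : List (E n → E n), l.length ≤ k → (∀ W ∈ l, W = X ∨ W = JVF J X) →
        ∀ l' : List (E n → E n), l'.Perm l → prodVF l' 0 = prodVF l 0) ↔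
    (∀ (m : ℕ) (W : E n → E n), 2 ≤ m → m ≤ k →
        IterBrk {X, JVF J X} m W → W 0 = 0) :=
  commutesUpTo_iff_bracketsVanishUpTo (S := {X, JVF J X}) (k := k) <| by
    rintro f (rfl | rfl)
    exacts [hX.1, hJsmooth.clm_apply hX.1]

/-- a `J`-tangent vector field `X` commutes at `0` up to order `k` (all
right-associated products of `≤ k` factors from `{X, JX}` are invariant at `0` under
permutation of the factors) iff all iterated Lie brackets of `X` and `JX` with `2, …, k`
factors vanish at `0`. -/
theorem commutes_iff_brackets_vanish {n : ℕ} (J : E n → (E n →L[ℝ] E n)) (φ : E n → ℝ)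
    (hJsmooth : ContDiff ℝ (⊤ : ℕ∞) J) (hJ2 : ∀ x v, J x (J x v) = -v)
    (hJ0 : ∀ v : E n, J 0 v = Complex.I • v)
    (hφsmooth : ContDiff ℝ (⊤ : ℕ∞) φ) (hφ0 : φ 0 = 0)
    (hreg : ∀ x, φ x = 0 → fderiv ℝ φ x ≠ 0)
    (X : E n → E n) (hX : JTangent J φ X) (k : ℕ) (hk : 1 ≤ k) :
    (∀ l : List (E n → E n), l.length ≤ k → (∀ W ∈ l, W = X ∨ W = JVF J X) →
        ∀ l' : List (E n → E n), l'.Perm l → prodVF l' 0 = prodVF l 0) ↔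
    (∀ (m : ℕ) (W : E n → E n), 2 ≤ m → m ≤ k →
        IterBrk {X, JVF J X} m W → W 0 = 0) :=
  commutes_iff_brackets_vanish_general J φ hJsmooth X hX k
end

section
/- Fix integers p, q ≥ 0. Let u and v be J-holomorphic disks with u(0) = v(0) = 0 and (∂^m u/∂x^m)(0) = (∂^m v/∂x^m)(0) for all 1 ≤ m ≤ p + q + 1. Then (∂^{p+q}/∂x^p ∂y^q)[Δ(φ∘u)](0) = (∂^{p+q}/∂x^p ∂y^q)[Δ(φ∘v)](0), where Δ = ∂²/∂x² + ∂²/∂y². In other words, the (p,q)-derivative at 0 of the Laplacian of φ∘u depends only on the derivatives of u in the x-direction at 0 up to order p+q+1 (this is what makes the (p,q)-th Levi form L^{p,q} : (ℝ^{2n})^{p+q+1} → ℝ well defined). -/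
/-!
On a `J`-holomorphic curve the Cauchy–Riemann equation `∂u/∂y = J(u) ∂u/∂x` trades
`y`-derivatives for `x`-derivatives: with Schwarz's theorem, `∂/∂y (∂^i u/∂x^i)` is a smooth
function, the same for all curves, of `u, ∂u/∂x, …, ∂^{i+1}u/∂x^{i+1}`. By the chain rule, `∂/∂x`
and `∂/∂y` therefore take a universal smooth function of the `x`-derivatives of order `< k` to
one of the `x`-derivatives of order `< k + 1`. The induction starts from `Δ(φ ∘ u)`, which
involves only `u` and `∂u/∂x`: its terms `dφ(∂²u/∂x²)` and `dφ(J J ∂²u/∂x²)` cancel since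
`J² = -1`. Hence the `(p,q)`-derivative of `Δ(φ ∘ u)` at `0` is a universal function of the
`∂^m u/∂x^m (0)` with `m ≤ p + q + 1`.
-/

open Complex Filter Asymptotics Metric Topology

open Function Set
open scoped ContDiff

section DirectionalDerivative

variable {X V W G : Type*} [NormedAddCommGroup X] [NormedSpace ℝ X] [NormedAddCommGroup V]
  [NormedSpace ℝ V] [NormedAddCommGroup W] [NormedSpace ℝ W] [NormedAddCommGroup G]
  [NormedSpace ℝ G]

theorem fderiv_comp_apply_of_differentiableAt {g : V → W} {f : X → V} {x : X}
    (hg : DifferentiableAt ℝ g (f x)) (hf : DifferentiableAt ℝ f x) (w : X) :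
    fderiv ℝ (fun y => g (f y)) x w = fderiv ℝ g (f x) (fderiv ℝ f x w) := by
  change fderiv ℝ (g ∘ f) x w = _
  rw [fderiv_comp x hg hf]
  rfl

theorem fderiv_clm_comp_apply_apply_s15 {A : V → W →L[ℝ] G} {f : X → V} {a : X → W} {x : X}
    (hA : DifferentiableAt ℝ A (f x)) (hf : DifferentiableAt ℝ f x)
    (ha : DifferentiableAt ℝ a x) (w : X) :
    fderiv ℝ (fun y => A (f y) (a y)) x w =
      fderiv ℝ A (f x) (fderiv ℝ f x w) (a x) + A (f x) (fderiv ℝ a x w) := by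
  have hAf : DifferentiableAt ℝ (fun y => A (f y)) x := hA.comp x hf
  rw [fderiv_clm_apply hAf ha, add_comm]
  simp [fderiv_comp_apply_of_differentiableAt hA hf]

theorem Set.EqOn.fderiv_apply {f g : X → W} {s : Set X} (h : EqOn f g s) (hs : IsOpen s)
    (w : X) : EqOn (fun x => fderiv ℝ f x w) (fun x => fderiv ℝ g x w) s := fun _ hx => by
  dsimp only
  rw [(h.eventuallyEq_of_mem (hs.mem_nhds hx)).fderiv_eq]

theorem fderiv_fderiv_apply_comm {f : X → W} {x : X} (hf : ContDiffAt ℝ 2 f x) (v w : X) :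
    fderiv ℝ (fun y => fderiv ℝ f y v) x w = fderiv ℝ (fun y => fderiv ℝ f y w) x v := by
  have hdf : DifferentiableAt ℝ (fderiv ℝ f) x :=
    (hf.fderiv_right (m := 1) le_rfl).differentiableAt one_ne_zero
  have hsymm := hf.isSymmSndFDerivAt (by simp [minSmoothness_of_isRCLikeNormedField]) w v
  simpa [fderiv_clm_apply hdf (differentiableAt_const _)] using hsymm

theorem fderiv_fderiv_comp_apply_self {g : V → W} {f : X → V} {s : Set X} {x : X}
    (hg : ContDiff ℝ 2 g) (hf : ContDiffOn ℝ 2 f s) (hs : IsOpen s) (hx : x ∈ s) (w : X) :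
    fderiv ℝ (fun y => fderiv ℝ (fun y => g (f y)) y w) x w =
      fderiv ℝ (fderiv ℝ g) (f x) (fderiv ℝ f x w) (fderiv ℝ f x w) +
        fderiv ℝ g (f x) (fderiv ℝ (fun y => fderiv ℝ f y w) x w) := by
  have hfx : ContDiffAt ℝ 2 f x := hf.contDiffAt (hs.mem_nhds hx)
  have hchain : EqOn (fun y => fderiv ℝ (fun y => g (f y)) y w)
      (fun y => fderiv ℝ g (f y) (fderiv ℝ f y w)) s := fun y hy =>
    fderiv_comp_apply_of_differentiableAt (hg.differentiable two_ne_zero _)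
      ((hf.contDiffAt (hs.mem_nhds hy)).differentiableAt two_ne_zero) w
  rw [(hchain.eventuallyEq_of_mem (hs.mem_nhds hx)).fderiv_eq]
  exact fderiv_clm_comp_apply_apply_s15
    ((hg.fderiv_right (m := 1) le_rfl).differentiable one_ne_zero _)
    (hfx.differentiableAt two_ne_zero)
    (((hfx.fderiv_right (m := 1) le_rfl).clm_apply contDiffAt_const).differentiableAt
      one_ne_zero) w

end DirectionalDerivative

section PartialDerivatives

variable {F : Type*} [NormedAddCommGroup F] [NormedSpace ℝ F] {f : ℂ → F} {s : Set ℂ}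

theorem contDiffOn_dx (hf : ContDiffOn ℝ ∞ f s) (hs : IsOpen s) : ContDiffOn ℝ ∞ (dx f) s :=
  (hf.fderiv_of_isOpen hs (by simp)).clm_apply contDiffOn_const

theorem contDiffOn_dx_iter (hf : ContDiffOn ℝ ∞ f s) (hs : IsOpen s) (m : ℕ) :
    ContDiffOn ℝ ∞ (dx^[m] f) s := by
  induction m with
  | zero => exact hf
  | succ m ih => simpa only [iterate_succ_apply'] using contDiffOn_dx ih hs

theorem dy_dx_iter_eqOn (hf : ContDiffOn ℝ ∞ f s) (hs : IsOpen s) (m : ℕ) :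
    EqOn (dy (dx^[m] f)) (dx^[m] (dy f)) s := by
  induction m with
  | zero => exact fun _ _ => rfl
  | succ m ih =>
    intro z hz
    calc dy (dx^[m + 1] f) z = dx (dy (dx^[m] f)) z := by
          rw [iterate_succ_apply']
          exact fderiv_fderiv_apply_comm
            (((contDiffOn_dx_iter hf hs m).contDiffAt (hs.mem_nhds hz)).of_le (by norm_cast)) _ _
      _ = dx (dx^[m] (dy f)) z := ih.fderiv_apply hs 1 hz
      _ = dx^[m + 1] (dy f) z := by rw [iterate_succ_apply']

end PartialDerivatives

noncomputable section Jets

variable {n : ℕ} {F : Type*} [NormedAddCommGroup F] [NormedSpace ℝ F]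
  {J : E n → (E n →L[ℝ] E n)} {s : Set ℂ} {u : ℂ → E n} {z : ℂ}

def xJet (u : ℂ → E n) (k : ℕ) (z : ℂ) : Fin k → E n := fun i => dx^[i] u z

def IsJHolOn (J : E n → (E n →L[ℝ] E n)) (s : Set ℂ) (u : ℂ → E n) : Prop :=
  ContDiffOn ℝ ∞ u s ∧ ∀ z ∈ s, dy u z = J (u z) (dx u z)

def JetDetermined (J : E n → (E n →L[ℝ] E n)) (s : Set ℂ) (k : ℕ)
    (Φ : (ℂ → E n) → ℂ → F) : Prop :=
  ∃ H : (Fin k → E n) → F, ContDiff ℝ ∞ H ∧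
    ∀ u, IsJHolOn J s u → EqOn (Φ u) (fun z => H (xJet u k z)) s

theorem fderiv_xJet_apply (hu : ContDiffOn ℝ ∞ u s) (hs : IsOpen s) (hz : z ∈ s) (k : ℕ)
    (w : ℂ) : fderiv ℝ (xJet u k) z w = fun i : Fin k => fderiv ℝ (dx^[i] u) z w := by
  have hdiff (i : Fin k) : DifferentiableAt ℝ (dx^[i] u) z :=
    ((contDiffOn_dx_iter hu hs i).contDiffAt (hs.mem_nhds hz)).differentiableAt (by simp)
  rw [show xJet u k = fun z (i : Fin k) => dx^[i] u z from rfl, fderiv_pi hdiff]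
  rfl

theorem differentiableAt_xJet (hu : ContDiffOn ℝ ∞ u s) (hs : IsOpen s) (hz : z ∈ s) (k : ℕ) :
    DifferentiableAt ℝ (xJet u k) z :=
  differentiableAt_pi.2 fun i =>
    ((contDiffOn_dx_iter hu hs i).contDiffAt (hs.mem_nhds hz)).differentiableAt (by simp)

namespace JetDetermined

variable {k l : ℕ} {Φ Ψ : (ℂ → E n) → ℂ → F}

theorem congr (h : JetDetermined J s k Φ) (hΨ : ∀ u, IsJHolOn J s u → EqOn (Ψ u) (Φ u) s) :
    JetDetermined J s k Ψ := by
  obtain ⟨H, hH, hΦ⟩ := h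
  exact ⟨H, hH, fun u hu => (hΨ u hu).trans (hΦ u hu)⟩

theorem mono (h : JetDetermined J s k Φ) (hkl : k ≤ l) : JetDetermined J s l Φ := by
  obtain ⟨H, hH, hΦ⟩ := h
  refine ⟨fun v => H (fun i => v (Fin.castLE hkl i)), hH.comp ?_, hΦ⟩
  exact contDiff_pi.2 fun i => contDiff_apply ℝ (E n) (Fin.castLE hkl i)

theorem pi {ι : Type*} [Fintype ι] {Φ : ι → (ℂ → E n) → ℂ → F}
    (h : ∀ i, JetDetermined J s k (Φ i)) : JetDetermined J s k (fun u z i => Φ i u z) := by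
  choose H hH hΦ using h
  exact ⟨fun v i => H i v, contDiff_pi.2 hH, fun u hu z hz => funext fun i => hΦ i u hu hz⟩

end JetDetermined

end Jets

section JetCalculus

variable {n : ℕ} {F : Type*} [NormedAddCommGroup F] [NormedSpace ℝ F]
  {J : E n → (E n →L[ℝ] E n)} {s : Set ℂ} {k : ℕ} {Φ : (ℂ → E n) → ℂ → F}

theorem jetDetermined_dx_iter_self (m : ℕ) : JetDetermined J s (m + 1) (fun u => dx^[m] u) :=
  ⟨fun v => v (Fin.last m), contDiff_apply ℝ (E n) (Fin.last m), fun _ _ _ _ => rfl⟩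

theorem jetDetermined_dy_self (hJ : ContDiff ℝ ∞ J) : JetDetermined J s 2 (fun u => dy u) :=
  ⟨fun v => J (v 0) (v 1), (hJ.comp (contDiff_apply ℝ (E n) 0)).clm_apply
    (contDiff_apply ℝ (E n) 1), fun _ hu z hz => hu.2 z hz⟩

theorem JetDetermined.fderiv_apply (h : JetDetermined J s k Φ) (hs : IsOpen s) (w : ℂ)
    (hw : ∀ i : Fin k, JetDetermined J s (k + 1) (fun u z => fderiv ℝ (dx^[i] u) z w)) :
    JetDetermined J s (k + 1) (fun u z => fderiv ℝ (Φ u) z w) := by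
  obtain ⟨H, hH, hΦ⟩ := h
  obtain ⟨K, hK, hΨ⟩ := JetDetermined.pi hw
  refine ⟨fun v => fderiv ℝ H (fun i => v i.castSucc) (K v), ?_, fun u hu z hz => ?_⟩
  · exact ((hH.fderiv_right (by simp)).comp
      (contDiff_pi.2 fun i => contDiff_apply ℝ (E n) i.castSucc)).clm_apply hK
  calc fderiv ℝ (Φ u) z w = fderiv ℝ (fun z => H (xJet u k z)) z w := by
        rw [((hΦ u hu).eventuallyEq_of_mem (hs.mem_nhds hz)).fderiv_eq]
    _ = fderiv ℝ H (xJet u k z) (fderiv ℝ (xJet u k) z w) :=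
        fderiv_comp_apply_of_differentiableAt (hH.differentiable (by simp) _)
          (differentiableAt_xJet hu.1 hs hz k) w
    _ = fderiv ℝ H (xJet u k z) (K (xJet u (k + 1) z)) := by
        rw [fderiv_xJet_apply hu.1 hs hz k w]
        exact congrArg _ (hΨ u hu hz)

theorem JetDetermined.deriv_x (h : JetDetermined J s k Φ) (hs : IsOpen s) :
    JetDetermined J s (k + 1) (fun u => dx (Φ u)) :=
  h.fderiv_apply hs 1 fun i =>
    ((jetDetermined_dx_iter_self (i + 1)).mono (by omega)).congr fun _ _ _ _ => by
      rw [iterate_succ_apply']; rfl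

theorem JetDetermined.iterate_deriv_x (h : JetDetermined J s k Φ) (hs : IsOpen s) (p : ℕ) :
    JetDetermined J s (k + p) (fun u => dx^[p] (Φ u)) := by
  induction p with
  | zero => exact h
  | succ p ih => simp only [iterate_succ_apply']; exact ih.deriv_x hs

theorem jetDetermined_dy_dx_iter_self (hJ : ContDiff ℝ ∞ J) (hs : IsOpen s) (m : ℕ) :
    JetDetermined J s (m + 2) (fun u => dy (dx^[m] u)) :=
  (((jetDetermined_dy_self hJ).iterate_deriv_x hs m).mono (by omega)).congr fun _ hu =>
    dy_dx_iter_eqOn hu.1 hs m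

theorem JetDetermined.deriv_y (h : JetDetermined J s k Φ) (hJ : ContDiff ℝ ∞ J)
    (hs : IsOpen s) :
    JetDetermined J s (k + 1) (fun u => dy (Φ u)) :=
  h.fderiv_apply hs I fun i => (jetDetermined_dy_dx_iter_self hJ hs i).mono (by omega)

theorem JetDetermined.iterate_deriv_y (h : JetDetermined J s k Φ) (hJ : ContDiff ℝ ∞ J)
    (hs : IsOpen s) (q : ℕ) : JetDetermined J s (k + q) (fun u => dy^[q] (Φ u)) := by
  induction q with
  | zero => exact h
  | succ q ih => simp only [iterate_succ_apply']; exact ih.deriv_y hJ hs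

end JetCalculus

section Laplacian

variable {n : ℕ} {J : E n → (E n →L[ℝ] E n)} {s : Set ℂ} {u : ℂ → E n} {z : ℂ}

theorem IsJHolOn.fderiv_dy_apply (hu : IsJHolOn J s u) (hJ : Differentiable ℝ J)
    (hs : IsOpen s) (hz : z ∈ s) (w : ℂ) :
    fderiv ℝ (dy u) z w =
      fderiv ℝ J (u z) (fderiv ℝ u z w) (dx u z) + J (u z) (fderiv ℝ (dx u) z w) := by
  have hCR : EqOn (dy u) (fun y => J (u y) (dx u y)) s := hu.2
  rw [(hCR.eventuallyEq_of_mem (hs.mem_nhds hz)).fderiv_eq]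
  exact fderiv_clm_comp_apply_apply_s15 (hJ _)
    ((hu.1.contDiffAt (hs.mem_nhds hz)).differentiableAt (by simp))
    (((contDiffOn_dx hu.1 hs).contDiffAt (hs.mem_nhds hz)).differentiableAt (by simp)) w

theorem jetDetermined_lap_comp (hJ : ContDiff ℝ ∞ J) (hJ2 : ∀ x v, J x (J x v) = -v)
    {φ : E n → ℝ} (hφ : ContDiff ℝ ∞ φ) (hs : IsOpen s) :
    JetDetermined J s 2 (fun u => lap (fun z => φ (u z))) := by
  refine ⟨fun v => fderiv ℝ (fderiv ℝ φ) (v 0) (v 1) (v 1)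
      + fderiv ℝ (fderiv ℝ φ) (v 0) (J (v 0) (v 1)) (J (v 0) (v 1))
      + fderiv ℝ φ (v 0) (fderiv ℝ J (v 0) (J (v 0) (v 1)) (v 1)
        + J (v 0) (fderiv ℝ J (v 0) (v 1) (v 1))), ?_, fun u hu z hz => ?_⟩
  · fun_prop
  have hJd : Differentiable ℝ J := hJ.differentiable (by simp)
  have hxx : dx (dx (fun z => φ (u z))) z = fderiv ℝ (fderiv ℝ φ) (u z) (dx u z) (dx u z)
      + fderiv ℝ φ (u z) (dx (dx u) z) :=
    fderiv_fderiv_comp_apply_self (hφ.of_le (by norm_cast)) (hu.1.of_le (by norm_cast)) hs hz 1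
  have hyy : dy (dy (fun z => φ (u z))) z = fderiv ℝ (fderiv ℝ φ) (u z) (dy u z) (dy u z)
      + fderiv ℝ φ (u z) (dy (dy u) z) :=
    fderiv_fderiv_comp_apply_self (hφ.of_le (by norm_cast)) (hu.1.of_le (by norm_cast)) hs hz I
  have hyx : dy (dx u) z = fderiv ℝ J (u z) (dx u z) (dx u z) + J (u z) (dx (dx u) z) :=
    (fderiv_fderiv_apply_comm ((hu.1.contDiffAt (hs.mem_nhds hz)).of_le (by norm_cast))
      _ _).trans (hu.fderiv_dy_apply hJd hs hz 1)
  have hyy_u : dy (dy u) z = fderiv ℝ J (u z) (J (u z) (dx u z)) (dx u z)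
      + J (u z) (dy (dx u) z) := by
    rw [← hu.2 z hz]
    exact hu.fderiv_dy_apply hJd hs hz I
  change dx (dx (fun z => φ (u z))) z + dy (dy (fun z => φ (u z))) z = _
  rw [hxx, hyy, hyy_u, hyx, hu.2 z hz]
  simp only [xJet, Fin.val_zero, Fin.val_one, iterate_zero_apply, iterate_one, map_add, hJ2,
    map_neg]
  ring

end Laplacian

theorem IsJDisk.isJHolOn {n : ℕ} {J : E n → (E n →L[ℝ] E n)} {u : ℂ → E n} {ε r : ℝ}
    (hu : IsJDisk J u ε) (hr : r ≤ ε) : IsJHolOn J (ball 0 r) u :=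
  ⟨hu.2.1.mono (ball_subset_ball hr), fun z hz => hu.2.2 z (ball_subset_ball hr hz)⟩

theorem levi_pq_well_defined_general {n : ℕ} (J : E n → (E n →L[ℝ] E n)) (φ : E n → ℝ)
    (hJsmooth : ContDiff ℝ (⊤ : ℕ∞) J) (hJ2 : ∀ x v, J x (J x v) = -v)
    (hφsmooth : ContDiff ℝ (⊤ : ℕ∞) φ)
    (p q : ℕ) (u v : ℂ → E n) (εu εv : ℝ)
    (hu : IsJDisk J u εu) (hv : IsJDisk J v εv) (hu0 : u 0 = 0) (hv0 : v 0 = 0)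
    (hjets : ∀ m : ℕ, 1 ≤ m → m ≤ p + q + 1 → dx^[m] u 0 = dx^[m] v 0) :
    mixD p q (lap (fun z => φ (u z))) 0 = mixD p q (lap (fun z => φ (v z))) 0 := by
  have hs : IsOpen (ball (0 : ℂ) (min εu εv)) := isOpen_ball
  have h0 : (0 : ℂ) ∈ ball (0 : ℂ) (min εu εv) := mem_ball_self (lt_min hu.1 hv.1)
  obtain ⟨H, -, hH⟩ := ((jetDetermined_lap_comp hJsmooth hJ2 hφsmooth hs).iterate_deriv_y
    hJsmooth hs q).iterate_deriv_x hs p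
  have hjet : xJet u (2 + q + p) 0 = xJet v (2 + q + p) 0 := by
    funext ⟨i, hi⟩
    rcases Nat.eq_zero_or_pos i with rfl | hpos
    · exact hu0.trans hv0.symm
    · exact hjets i hpos (by omega)
  calc mixD p q (lap (fun z => φ (u z))) 0 = H (xJet u (2 + q + p) 0) :=
        hH u (hu.isJHolOn (min_le_left _ _)) h0
    _ = H (xJet v (2 + q + p) 0) := by rw [hjet]
    _ = mixD p q (lap (fun z => φ (v z))) 0 := (hH v (hv.isJHolOn (min_le_right _ _)) h0).symm

/-- the `(p,q)`-derivative at `0` of `Δ(φ∘u)` depends only on the derivatives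
`∂^m u/∂x^m(0)`, `1 ≤ m ≤ p+q+1`, of the `J`-holomorphic disk `u` (well-definedness of the
`(p,q)`-th Levi form). -/
theorem levi_pq_well_defined {n : ℕ} (J : E n → (E n →L[ℝ] E n)) (φ : E n → ℝ)
    (hJsmooth : ContDiff ℝ (⊤ : ℕ∞) J) (hJ2 : ∀ x v, J x (J x v) = -v)
    (hJ0 : ∀ v₀ : E n, J 0 v₀ = Complex.I • v₀)
    (hφsmooth : ContDiff ℝ (⊤ : ℕ∞) φ) (hφ0 : φ 0 = 0)
    (hreg : ∀ x, φ x = 0 → fderiv ℝ φ x ≠ 0)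
    (p q : ℕ) (u v : ℂ → E n) (εu εv : ℝ)
    (hu : IsJDisk J u εu) (hv : IsJDisk J v εv) (hu0 : u 0 = 0) (hv0 : v 0 = 0)
    (hjets : ∀ m : ℕ, 1 ≤ m → m ≤ p + q + 1 → dx^[m] u 0 = dx^[m] v 0) :
    mixD p q (lap (fun z => φ (u z))) 0 = mixD p q (lap (fun z => φ (v z))) 0 :=
  levi_pq_well_defined_general J φ hJsmooth hJ2 hφsmooth p q u v εu εv hu hv hu0 hv0 hjets
end
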